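/- arXiv:1407.7002 — 8 statements merged into one kernel-verified Lean document; each statement's English description precedes it below -/
import Mathlib

section
/- Every natural number N can be written uniquely as N = Σ_{k=0}^n b_{k+1} q_k, where b_k ∈ ℕ, b_1 < a_1, b_k ≤ a_k for all k, and b_{k-1} = 0 whenever b_k = a_k. (Ostrowski representation.) -/
/-! For admissible digits, `∑_{k<n} b_{k+1} q_k < q_n`: at each step either the top digit is at
most `a_n - 1`, or it equals `a_n`, the digit below it vanishes and `q_{n-2}` is the slack. So the
top digit of such a sum is its quotient by `q_{n-1}` and the rest is the remainder, which gives
uniqueness. Existence is the greedy algorithm; when the greedy digit is maximal the remainder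
drops below `q_{n-2}`, so the next digit is zero. The only input from the continued fraction is
`a_k ≥ 1` for `k ≥ 1`, which holds since every complete quotient is irrational, hence `> 1`. -/

open Finset Function

theorem Irrational.of_eq_intCast_add_one_div {x y : ℝ} {n : ℤ} (hx : Irrational x)
    (h : x = n + 1 / y) : Irrational y := by
  have hy : y⁻¹ = x - n := by rw [h]; ring
  exact (hy ▸ hx.sub_intCast n).of_inv

theorem Irrational.one_lt_of_eq_floor_add_one_div {x y : ℝ} (hx : Irrational x)
    (h : x = ⌊x⌋ + 1 / y) : 1 < y := by
  have hfract : y⁻¹ = Int.fract x := by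
    rw [one_div] at h
    rw [Int.fract]
    linarith
  have hpos : 0 < y⁻¹ := hfract ▸ Int.fract_pos.2 (hx.ne_int _)
  have hlt : y⁻¹ < 1 := hfract ▸ Int.fract_lt_one x
  simpa using one_lt_inv_iff₀.2 ⟨hpos, hlt⟩

theorem one_le_partialQuotient_succ {x : ℝ} (hx : Irrational x) {aCF : ℕ → ℤ} {ζ : ℕ → ℝ}
    (hζ0 : ζ 0 = x) (hfloor : ∀ k, aCF k = ⌊ζ k⌋)
    (hζ : ∀ k, ζ k = aCF k + 1 / ζ (k + 1)) (k : ℕ) : 1 ≤ aCF (k + 1) := by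
  have hirr : ∀ k, Irrational (ζ k) := by
    intro k
    induction k with
    | zero => rwa [hζ0]
    | succ k ih => exact ih.of_eq_intCast_add_one_div (hζ k)
  have hgt : 1 < ζ (k + 1) :=
    (hirr k).one_lt_of_eq_floor_add_one_div (by rw [← hfloor]; exact hζ k)
  rw [hfloor]
  exact Int.le_floor.2 (by exact_mod_cast hgt.le)

namespace Ostrowski

structure IsConvergentDenoms (a q : ℕ → ℤ) : Prop where
  zero : q 0 = 1
  one : q 1 = a 1
  add_two : ∀ k, q (k + 2) = a (k + 2) * q (k + 1) + q k
  one_le_quot : ∀ k, 1 ≤ a (k + 1)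

structure IsAdmissible (a : ℕ → ℤ) (b : ℕ → ℕ) : Prop where
  zero : b 0 = 0
  one_lt : (b 1 : ℤ) < a 1
  le : ∀ k ≥ 1, (b k : ℤ) ≤ a k
  eq_imp : ∀ k ≥ 2, (b k : ℤ) = a k → b (k - 1) = 0

theorem isAdmissible_iff {a : ℕ → ℤ} {b : ℕ → ℕ} :
    IsAdmissible a b ↔ b 0 = 0 ∧ (b 1 : ℤ) < a 1 ∧ (∀ k ≥ 1, (b k : ℤ) ≤ a k) ∧
      (∀ k ≥ 2, (b k : ℤ) = a k → b (k - 1) = 0) :=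
  ⟨fun ⟨h₀, h₁, h₂, h₃⟩ => ⟨h₀, h₁, h₂, h₃⟩, fun ⟨h₀, h₁, h₂, h₃⟩ => ⟨h₀, h₁, h₂, h₃⟩⟩

def digitSum (q : ℕ → ℤ) (b : ℕ → ℕ) (n : ℕ) : ℤ :=
  ∑ k ∈ range n, (b (k + 1) : ℤ) * q k

variable {a q : ℕ → ℤ} {b c : ℕ → ℕ} {n : ℕ}

namespace IsConvergentDenoms

theorem pos (hq : IsConvergentDenoms a q) : ∀ k, 0 < q k
  | 0 => by rw [hq.zero]; exact one_pos
  | 1 => by rw [hq.one]; exact hq.one_le_quot 0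
  | k + 2 => by
    rw [hq.add_two]
    have ha : 0 < a (k + 2) := hq.one_le_quot (k + 1)
    exact add_pos (mul_pos ha (hq.pos (k + 1))) (hq.pos k)

theorem add_le_add_two (hq : IsConvergentDenoms a q) (k : ℕ) : q (k + 1) + q k ≤ q (k + 2) := by
  have ha : 1 ≤ a (k + 2) := hq.one_le_quot (k + 1)
  rw [hq.add_two]
  nlinarith [hq.pos (k + 1)]

theorem le_succ (hq : IsConvergentDenoms a q) : ∀ k, q k ≤ q (k + 1)
  | 0 => by rw [hq.zero, hq.one]; exact hq.one_le_quot 0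
  | k + 1 => by linarith [hq.add_le_add_two k, hq.pos k]

theorem natCast_lt (hq : IsConvergentDenoms a q) : ∀ k : ℕ, (k : ℤ) < q (k + 1)
  | 0 => hq.pos 1
  | k + 1 => by push_cast; linarith [hq.add_le_add_two k, hq.natCast_lt k, hq.pos k]

end IsConvergentDenoms

theorem digitSum_succ : digitSum q b (n + 1) = digitSum q b n + b (n + 1) * q n :=
  sum_range_succ _ _

theorem digitSum_update (d : ℕ) :
    digitSum q (update b (n + 1) d) (n + 1) = digitSum q b n + d * q n := by
  rw [digitSum_succ, update_self]
  congr 1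
  refine sum_congr rfl fun k hk => ?_
  rw [update_of_ne (by rw [mem_range] at hk; omega)]

theorem finsum_eq_digitSum (hbn : ∀ k > n, b k = 0) :
    ∑ᶠ k, (b (k + 1) : ℤ) * q k = digitSum q b n := by
  refine finsum_eq_sum_of_support_subset _ fun k hk => ?_
  by_contra hkn
  simp only [coe_range, Set.mem_Iio, not_lt] at hkn
  exact hk (by simp [hbn (k + 1) (by omega)])

theorem digitSum_nonneg (hq : IsConvergentDenoms a q) : 0 ≤ digitSum q b n :=
  sum_nonneg fun k _ => mul_nonneg (Nat.cast_nonneg _) (hq.pos k).le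

theorem isAdmissible_zero (ha : ∀ k, 1 ≤ a (k + 1)) : IsAdmissible a 0 := by
  have hpos : ∀ k ≥ 1, 0 < a k := fun k hk => by
    obtain ⟨k, rfl⟩ := Nat.exists_eq_add_of_le' hk
    exact ha k
  refine ⟨rfl, ?_, fun k hk => ?_, fun k hk h => ?_⟩
  · simpa using hpos 1 le_rfl
  · simpa using (hpos k hk).le
  · simp only [Pi.zero_apply, Nat.cast_zero] at h
    exact absurd h (hpos k (by omega)).ne

namespace IsAdmissible

theorem update (hb : IsAdmissible a b) (hbn : ∀ k > n, b k = 0) (ha : 0 < a (n + 2)) {d : ℕ}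
    (hd : (d : ℤ) < a (n + 1) ∨ ((d : ℤ) = a (n + 1) ∧ 1 ≤ n ∧ b n = 0)) :
    IsAdmissible a (update b (n + 1) d) where
  zero := by rw [update_of_ne (by omega)]; exact hb.zero
  one_lt := by
    rcases eq_or_ne n 0 with rfl | hn
    · rw [update_self]
      simp only [zero_add] at hd
      omega
    · rw [update_of_ne (by omega)]; exact hb.one_lt
  le k hk := by
    rcases eq_or_ne k (n + 1) with rfl | hkn
    · rw [update_self]; omega
    · rw [update_of_ne hkn]; exact hb.le k hk
  eq_imp k hk h := by
    rcases eq_or_ne k (n + 1) with rfl | hkn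
    · rw [update_self] at h
      obtain ⟨-, hn, hbn₀⟩ := hd.resolve_left (by omega)
      rwa [Nat.add_sub_cancel, update_of_ne (by omega)]
    · rw [update_of_ne hkn] at h
      rcases eq_or_ne k (n + 2) with rfl | hkn'
      · rw [hbn _ (by omega)] at h; omega
      · rw [update_of_ne (by omega)]; exact hb.eq_imp k hk h

theorem digitSum_lt (hq : IsConvergentDenoms a q) (hb : IsAdmissible a b) :
    ∀ n, digitSum q b n < q n
  | 0 => by simp [digitSum, hq.zero]
  | 1 => by simpa [digitSum, hq.zero, hq.one] using hb.one_lt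
  | n + 2 => by
    have ih₀ := hb.digitSum_lt hq n
    have ih₁ := hb.digitSum_lt hq (n + 1)
    rw [digitSum_succ, hq.add_two]
    rcases (hb.le (n + 2) (by omega)).lt_or_eq with hlt | heq
    · have hle : (b (n + 2) : ℤ) ≤ a (n + 2) - 1 := by omega
      nlinarith [hq.pos n, hq.pos (n + 1)]
    · have hz : b (n + 1) = 0 := hb.eq_imp (n + 2) (by omega) heq
      rw [digitSum_succ, hz, heq]
      push_cast
      linarith

theorem digitSum_succ_ediv_emod (hq : IsConvergentDenoms a q) (hb : IsAdmissible a b) (n : ℕ) :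
    digitSum q b (n + 1) / q n = b (n + 1) ∧ digitSum q b (n + 1) % q n = digitSum q b n :=
  (Int.ediv_emod_unique (hq.pos n)).2
    ⟨by rw [digitSum_succ]; ring, digitSum_nonneg hq, hb.digitSum_lt hq n⟩

theorem eq_of_digitSum_eq (hq : IsConvergentDenoms a q) (hb : IsAdmissible a b)
    (hc : IsAdmissible a c) : ∀ n, digitSum q b n = digitSum q c n → ∀ k ≤ n, b k = c k
  | 0, _, k, hk => by rw [Nat.le_zero.1 hk, hb.zero, hc.zero]
  | n + 1, h, k, hk => by
    obtain ⟨hb₁, hb₂⟩ := hb.digitSum_succ_ediv_emod hq n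
    obtain ⟨hc₁, hc₂⟩ := hc.digitSum_succ_ediv_emod hq n
    rcases hk.lt_or_eq with hk | rfl
    · exact eq_of_digitSum_eq hq hb hc n (by rw [← hb₂, ← hc₂, h]) k (by omega)
    · exact_mod_cast hb₁.symm.trans (h ▸ hc₁)

end IsAdmissible

theorem ediv_lt_or_emod_lt (hq : IsConvergentDenoms a q) {N : ℤ} {m : ℕ}
    (hN : N < q (m + 2)) :
    N / q (m + 1) < a (m + 2) ∨ (N / q (m + 1) = a (m + 2) ∧ N % q (m + 1) < q m) := by
  have hdiv := Int.mul_ediv_add_emod N (q (m + 1))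
  have hmod := Int.emod_nonneg N (hq.pos (m + 1)).ne'
  have hmono := hq.le_succ m
  rw [hq.add_two] at hN
  rcases lt_trichotomy (N / q (m + 1)) (a (m + 2)) with hlt | heq | hgt
  · exact .inl hlt
  · refine .inr ⟨heq, ?_⟩
    rw [heq] at hdiv
    linarith
  · have : (a (m + 2) + 1) * q (m + 1) ≤ N / q (m + 1) * q (m + 1) :=
      mul_le_mul_of_nonneg_right hgt (hq.pos (m + 1)).le
    nlinarith

theorem exists_digitSum_succ_eq (hq : IsConvergentDenoms a q) {N : ℤ} (hN₀ : 0 ≤ N)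
    (hb : IsAdmissible a b) (hbn : ∀ k > n, b k = 0) (hbN : digitSum q b n = N % q n)
    (hd : N / q n < a (n + 1) ∨ (N / q n = a (n + 1) ∧ 1 ≤ n ∧ b n = 0)) :
    ∃ b', IsAdmissible a b' ∧ (∀ k > n + 1, b' k = 0) ∧ digitSum q b' (n + 1) = N := by
  have hd₀ : 0 ≤ N / q n := Int.ediv_nonneg hN₀ (hq.pos n).le
  refine ⟨update b (n + 1) (N / q n).toNat,
    hb.update hbn (hq.one_le_quot (n + 1)) (by rwa [Int.toNat_of_nonneg hd₀]), ?_, ?_⟩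
  · intro k hk
    rw [update_of_ne (by omega)]
    exact hbn k (by omega)
  · rw [digitSum_update, hbN, Int.toNat_of_nonneg hd₀]
    linarith [Int.mul_ediv_add_emod N (q n)]

theorem exists_digitSum_eq (hq : IsConvergentDenoms a q) :
    ∀ n (N : ℤ), 0 ≤ N → N < q n →
      ∃ b, IsAdmissible a b ∧ (∀ k > n, b k = 0) ∧ digitSum q b n = N
  | 0, N, hN₀, hN => by
    rw [hq.zero] at hN
    exact ⟨0, isAdmissible_zero hq.one_le_quot, fun _ _ => rfl, by simp [digitSum]; omega⟩
  | 1, N, hN₀, hN => by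
    obtain ⟨b, hb, hbn, hbN⟩ := exists_digitSum_eq hq 0 (N % q 0)
      (Int.emod_nonneg N (hq.pos 0).ne') (Int.emod_lt_of_pos N (hq.pos 0))
    refine exists_digitSum_succ_eq hq hN₀ hb hbn hbN (.inl ?_)
    rwa [hq.zero, Int.ediv_one, ← hq.one]
  | m + 2, N, hN₀, hN => by
    have hr₀ := Int.emod_nonneg N (hq.pos (m + 1)).ne'
    rcases ediv_lt_or_emod_lt hq hN with hlt | ⟨heq, hr⟩
    · obtain ⟨b, hb, hbn, hbN⟩ :=
        exists_digitSum_eq hq (m + 1) _ hr₀ (Int.emod_lt_of_pos N (hq.pos (m + 1)))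
      exact exists_digitSum_succ_eq hq hN₀ hb hbn hbN (.inl hlt)
    · obtain ⟨b, hb, hbn, hbN⟩ := exists_digitSum_eq hq m _ hr₀ hr
      have hbn' : ∀ k > m + 1, b k = 0 := fun k hk => hbn k (by omega)
      refine exists_digitSum_succ_eq hq hN₀ hb hbn' ?_ (.inr ⟨heq, by omega, hbn _ (by omega)⟩)
      rw [← finsum_eq_digitSum hbn', finsum_eq_digitSum hbn, hbN]

theorem existsUnique_repr (hq : IsConvergentDenoms a q) (N : ℕ) :
    ∃! b : ℕ → ℕ, {k | b k ≠ 0}.Finite ∧ IsAdmissible a b ∧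
      (N : ℤ) = ∑ᶠ k, (b (k + 1) : ℤ) * q k := by
  obtain ⟨b, hb, hbn, hbN⟩ := exists_digitSum_eq hq (N + 1) N (by positivity) (hq.natCast_lt N)
  have hbfin : {k | b k ≠ 0}.Finite :=
    (Set.finite_le_nat (N + 1)).subset fun k hk => not_lt.1 fun h => hk (hbn k h)
  refine ⟨b, ⟨hbfin, hb, by rw [finsum_eq_digitSum hbn, hbN]⟩, ?_⟩
  rintro c ⟨hcfin, hc, hcN⟩
  obtain ⟨m, hm⟩ := hcfin.bddAbove
  set n := max m (N + 1)
  have hcn : ∀ k > n, c k = 0 := fun k hk => by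
    by_contra h
    exact absurd (hm h) (by omega)
  have hbn' : ∀ k > n, b k = 0 := fun k hk => hbn k (by omega)
  funext k
  rcases le_or_gt k n with hk | hk
  · refine hc.eq_of_digitSum_eq hq hb n ?_ k hk
    rw [← finsum_eq_digitSum hcn, ← finsum_eq_digitSum hbn', ← hcN, finsum_eq_digitSum hbn, hbN]
  · rw [hcn k hk, hbn' k hk]

end Ostrowski

theorem ostrowski_representation_general (a : ℝ) (ha : Irrational a)
    (aCF : ℕ → ℤ) (ζ : ℕ → ℝ)
    (hζ0 : ζ 0 = a)
    (hfloor : ∀ k, aCF k = ⌊ζ k⌋)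
    (hζ : ∀ k, ζ k = (aCF k : ℝ) + 1 / ζ (k + 1))
    (q : ℕ → ℤ)
    (hq0 : q 0 = 1) (hq1 : q 1 = aCF 1)
    (hqrec : ∀ k, q (k + 2) = aCF (k + 2) * q (k + 1) + q k)
    (N : ℕ) :
    ∃! b : ℕ → ℕ,
      {k | b k ≠ 0}.Finite ∧
      b 0 = 0 ∧
      (b 1 : ℤ) < aCF 1 ∧
      (∀ k ≥ 1, (b k : ℤ) ≤ aCF k) ∧
      (∀ k ≥ 2, (b k : ℤ) = aCF k → b (k - 1) = 0) ∧
      (N : ℤ) = ∑ᶠ k : ℕ, (b (k + 1) : ℤ) * q k := by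
  have hq : Ostrowski.IsConvergentDenoms aCF q :=
    ⟨hq0, hq1, hqrec, one_le_partialQuotient_succ ha hζ0 hfloor hζ⟩
  simpa only [Ostrowski.isAdmissible_iff, and_assoc] using Ostrowski.existsUnique_repr hq N

theorem ostrowski_representation (a : ℝ) (ha : Irrational a)
    (aCF : ℕ → ℤ) (ζ : ℕ → ℝ)
    (hζ0 : ζ 0 = a)
    (hfloor : ∀ k, aCF k = ⌊ζ k⌋)
    (hζ : ∀ k, ζ k = (aCF k : ℝ) + 1 / ζ (k + 1))
    (p q : ℕ → ℤ)
    (hq0 : q 0 = 1) (hq1 : q 1 = aCF 1)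
    (hqrec : ∀ k, q (k + 2) = aCF (k + 2) * q (k + 1) + q k)
    (hp0 : p 0 = aCF 0) (hp1 : p 1 = aCF 1 * aCF 0 + 1)
    (hprec : ∀ k, p (k + 2) = aCF (k + 2) * p (k + 1) + p k)
    (β : ℕ → ℝ)
    (hβ : ∀ k, β k = (q k : ℝ) * a - (p k : ℝ)) (N : ℕ) :
    ∃! b : ℕ → ℕ,
      {k | b k ≠ 0}.Finite ∧
      b 0 = 0 ∧
      (b 1 : ℤ) < aCF 1 ∧
      (∀ k ≥ 1, (b k : ℤ) ≤ aCF k) ∧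
      (∀ k ≥ 2, (b k : ℤ) = aCF k → b (k - 1) = 0) ∧
      (N : ℤ) = ∑ᶠ k : ℕ, (b (k + 1) : ℤ) * q k :=
  ostrowski_representation_general a ha aCF ζ hζ0 hfloor hζ q hq0 hq1 hqrec N
end

section
/- Let M ≠ N be natural numbers with Ostrowski representations Σ_k b_k q_k and Σ_k c_k q_k respectively, and let n be maximal with b_n ≠ c_n. Then M < N if and only if b_n < c_n. -/
/-!
Every admissible digit string satisfies `∑_{k < n} b_{k+1} q_k < q_n`: by induction on `n`, either
`b_n < a_n` and `q_n ≥ a_n q_{n-1}` absorbs the carry, or `b_n = a_n`, then `b_{n-1} = 0` and the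
recursion `q_n = a_n q_{n-1} + q_{n-2}` absorbs it. So, as in base ten, the highest digit where two
representations differ outweighs everything below it. The partial quotients are positive because
the complete quotients of an irrational number stay irrational, so their fractional parts lie in `(0, 1)`.
-/

open Finset Filter

lemma Irrational.one_lt_inv_fract {x : ℝ} (hx : Irrational x) : 1 < (Int.fract x)⁻¹ :=
  (one_lt_inv₀ (Int.fract_pos.2 (hx.ne_int ⌊x⌋))).2 (Int.fract_lt_one x)

section CompleteQuotients

variable {aCF : ℕ → ℤ} {ζ : ℕ → ℝ}

lemma inv_complete_quotient_succ (hζ : ∀ k, ζ k = aCF k + 1 / ζ (k + 1)) (k : ℕ) :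
    (ζ (k + 1))⁻¹ = ζ k - aCF k := by
  rw [hζ k]; ring

lemma irrational_complete_quotient (hζ : ∀ k, ζ k = aCF k + 1 / ζ (k + 1))
    (h0 : Irrational (ζ 0)) : ∀ k, Irrational (ζ k)
  | 0 => h0
  | k + 1 => Irrational.of_inv <| by
      rw [inv_complete_quotient_succ hζ]
      exact (irrational_complete_quotient hζ h0 k).sub_intCast _

lemma one_le_partial_quotient (hfloor : ∀ k, aCF k = ⌊ζ k⌋)
    (hζ : ∀ k, ζ k = aCF k + 1 / ζ (k + 1)) (h0 : Irrational (ζ 0)) :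
    ∀ k ≥ 1, 1 ≤ aCF k := by
  rintro (_ | j) hj
  · omega
  have hfract : ζ (j + 1) = (Int.fract (ζ j))⁻¹ := by
    rw [Int.fract, ← hfloor, ← inv_complete_quotient_succ hζ, inv_inv]
  rw [hfloor, Int.le_floor, hfract, Int.cast_one]
  exact (irrational_complete_quotient hζ h0 j).one_lt_inv_fract.le

end CompleteQuotients

structure IsContinuantDenominators (aCF q : ℕ → ℤ) : Prop where
  zero : q 0 = 1
  one : q 1 = aCF 1
  add_two : ∀ k, q (k + 2) = aCF (k + 2) * q (k + 1) + q k

structure IsOstrowskiDigits (aCF : ℕ → ℤ) (b : ℕ → ℕ) : Prop where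
  one_lt : (b 1 : ℤ) < aCF 1
  le : ∀ k ≥ 1, (b k : ℤ) ≤ aCF k
  eq_zero_of_eq : ∀ k ≥ 2, (b k : ℤ) = aCF k → b (k - 1) = 0

variable {aCF q : ℕ → ℤ}

namespace IsContinuantDenominators

theorem one_le (hq : IsContinuantDenominators aCF q) (haCF : ∀ k ≥ 1, 1 ≤ aCF k) :
    ∀ k, 1 ≤ q k
  | 0 => hq.zero.ge
  | 1 => hq.one ▸ haCF 1 le_rfl
  | k + 2 => by
    have := hq.one_le haCF k
    have := hq.one_le haCF (k + 1)
    have := haCF (k + 2) (by omega)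
    rw [hq.add_two]
    nlinarith

theorem mul_le_succ (hq : IsContinuantDenominators aCF q) (haCF : ∀ k ≥ 1, 1 ≤ aCF k) :
    ∀ k, aCF (k + 1) * q k ≤ q (k + 1)
  | 0 => by simp [hq.zero, hq.one]
  | k + 1 => by
    rw [hq.add_two]
    linarith [hq.one_le haCF k]

end IsContinuantDenominators

namespace IsOstrowskiDigits

variable {b : ℕ → ℕ}

theorem sum_lt (hb : IsOstrowskiDigits aCF b) (hq : IsContinuantDenominators aCF q)
    (haCF : ∀ k ≥ 1, 1 ≤ aCF k) : ∀ n, ∑ k ∈ range n, (b (k + 1) : ℤ) * q k < q n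
  | 0 => by simp [hq.zero]
  | 1 => by simpa [hq.zero, hq.one] using hb.one_lt
  | m + 2 => by
    rw [sum_range_succ]
    rcases (hb.le (m + 2) (by omega)).lt_or_eq with hlt | heq
    · have hqm := hq.one_le haCF (m + 1)
      calc _ < q (m + 1) + (b (m + 2) : ℤ) * q (m + 1) := by
              linarith [hb.sum_lt hq haCF (m + 1)]
        _ ≤ aCF (m + 2) * q (m + 1) := by nlinarith
        _ ≤ q (m + 2) := hq.mul_le_succ haCF (m + 1)
    · have hzero : b (m + 1) = 0 := hb.eq_zero_of_eq (m + 2) (by omega) heq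
      rw [sum_range_succ, hzero, heq, hq.add_two]
      push_cast
      linarith [hb.sum_lt hq haCF m]

theorem sum_range_lt_of_lt (hb : IsOstrowskiDigits aCF b) (hq : IsContinuantDenominators aCF q)
    (haCF : ∀ k ≥ 1, 1 ≤ aCF k) {c : ℕ → ℕ} {n K : ℕ} (hn : n ≠ 0) (hnK : n ≤ K)
    (hlt : b n < c n) (hagree : ∀ m, n < m → b m = c m) :
    ∑ k ∈ range K, (b (k + 1) : ℤ) * q k < ∑ k ∈ range K, (c (k + 1) : ℤ) * q k := by
  obtain ⟨m, rfl⟩ := Nat.exists_eq_succ_of_ne_zero hn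
  rw [← sum_range_add_sum_Ico _ hnK, ← sum_range_add_sum_Ico _ hnK]
  have htail : ∑ k ∈ Ico (m + 1) K, (b (k + 1) : ℤ) * q k =
      ∑ k ∈ Ico (m + 1) K, (c (k + 1) : ℤ) * q k :=
    sum_congr rfl fun k hk => by rw [hagree (k + 1) (by simp at hk; omega)]
  rw [htail, add_lt_add_iff_right, sum_range_succ, sum_range_succ]
  have hqm := hq.one_le haCF m
  have hdigit : (b (m + 1) : ℤ) + 1 ≤ c (m + 1) := by exact_mod_cast hlt
  have hc_nonneg : 0 ≤ ∑ k ∈ range m, (c (k + 1) : ℤ) * q k :=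
    sum_nonneg fun k _ => mul_nonneg (Nat.cast_nonneg _) (by linarith [hq.one_le haCF k])
  calc _ < q m + (b (m + 1) : ℤ) * q m := by linarith [hb.sum_lt hq haCF m]
    _ ≤ c (m + 1) * q m := by nlinarith
    _ ≤ _ := le_add_of_nonneg_left hc_nonneg

end IsOstrowskiDigits

lemma eventually_finsum_eq_sum_range {M : Type*} [AddCommMonoid M] {f : ℕ → M}
    (hf : (Function.support f).Finite) : ∀ᶠ K in atTop, ∑ᶠ k, f k = ∑ k ∈ range K, f k := by
  obtain ⟨B, hB⟩ := hf.bddAbove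
  filter_upwards [eventually_gt_atTop B] with K hK
  exact finsum_eq_sum_of_support_subset f fun k hk => by simpa using (hB hk).trans_lt hK

lemma finite_support_digit_mul {b : ℕ → ℕ} (hb : {k | b k ≠ 0}.Finite) (q : ℕ → ℤ) :
    (Function.support fun k => (b (k + 1) : ℤ) * q k).Finite :=
  (hb.preimage (add_left_injective 1).injOn).subset fun _ hk =>
    by exact_mod_cast left_ne_zero_of_mul hk

theorem ostrowski_order_nat_general (a : ℝ) (ha : Irrational a)
    (aCF : ℕ → ℤ) (ζ : ℕ → ℝ)
    (hζ0 : ζ 0 = a)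
    (hfloor : ∀ k, aCF k = ⌊ζ k⌋)
    (hζ : ∀ k, ζ k = (aCF k : ℝ) + 1 / ζ (k + 1))
    (q : ℕ → ℤ)
    (hq0 : q 0 = 1) (hq1 : q 1 = aCF 1)
    (hqrec : ∀ k, q (k + 2) = aCF (k + 2) * q (k + 1) + q k)
    (M N : ℕ)
    (b : ℕ → ℕ)
    (hbfin : {k | b k ≠ 0}.Finite)
    (hb0 : b 0 = 0)
    (hb1 : (b 1 : ℤ) < aCF 1)
    (hble : ∀ k ≥ 1, (b k : ℤ) ≤ aCF k)
    (hbcons : ∀ k ≥ 2, (b k : ℤ) = aCF k → b (k - 1) = 0)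
    (hMrep : (M : ℤ) = ∑ᶠ k : ℕ, (b (k + 1) : ℤ) * q k)
    (c : ℕ → ℕ)
    (hcfin : {k | c k ≠ 0}.Finite)
    (hc0 : c 0 = 0)
    (hc1 : (c 1 : ℤ) < aCF 1)
    (hcle : ∀ k ≥ 1, (c k : ℤ) ≤ aCF k)
    (hccons : ∀ k ≥ 2, (c k : ℤ) = aCF k → c (k - 1) = 0)
    (hNrep : (N : ℤ) = ∑ᶠ k : ℕ, (c (k + 1) : ℤ) * q k)
    (n : ℕ) (hn : b n ≠ c n) (hnmax : ∀ m, n < m → b m = c m) :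
    M < N ↔ b n < c n := by
  have haCF := one_le_partial_quotient hfloor hζ (hζ0 ▸ ha)
  have hq : IsContinuantDenominators aCF q := ⟨hq0, hq1, hqrec⟩
  have hb : IsOstrowskiDigits aCF b := ⟨hb1, hble, hbcons⟩
  have hc : IsOstrowskiDigits aCF c := ⟨hc1, hcle, hccons⟩
  have hn0 : n ≠ 0 := by rintro rfl; exact hn (hb0.trans hc0.symm)
  obtain ⟨K, hMK, hNK, hnK⟩ :=
    ((eventually_finsum_eq_sum_range (finite_support_digit_mul hbfin q)).and
      ((eventually_finsum_eq_sum_range (finite_support_digit_mul hcfin q)).and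
        (eventually_ge_atTop n))).exists
  rw [hMK] at hMrep
  rw [hNK] at hNrep
  rcases hn.lt_or_gt with hlt | hgt
  · have := hb.sum_range_lt_of_lt hq haCF hn0 hnK hlt hnmax
    exact iff_of_true (by omega) hlt
  · have := hc.sum_range_lt_of_lt hq haCF hn0 hnK hgt fun m hm => (hnmax m hm).symm
    exact iff_of_false (by omega) hgt.not_gt

theorem ostrowski_order_nat (a : ℝ) (ha : Irrational a)
    (aCF : ℕ → ℤ) (ζ : ℕ → ℝ)
    (hζ0 : ζ 0 = a)
    (hfloor : ∀ k, aCF k = ⌊ζ k⌋)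
    (hζ : ∀ k, ζ k = (aCF k : ℝ) + 1 / ζ (k + 1))
    (p q : ℕ → ℤ)
    (hq0 : q 0 = 1) (hq1 : q 1 = aCF 1)
    (hqrec : ∀ k, q (k + 2) = aCF (k + 2) * q (k + 1) + q k)
    (hp0 : p 0 = aCF 0) (hp1 : p 1 = aCF 1 * aCF 0 + 1)
    (hprec : ∀ k, p (k + 2) = aCF (k + 2) * p (k + 1) + p k)
    (β : ℕ → ℝ)
    (hβ : ∀ k, β k = (q k : ℝ) * a - (p k : ℝ)) (M N : ℕ)
    (b : ℕ → ℕ)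
    (hbfin : {k | b k ≠ 0}.Finite)
    (hb0 : b 0 = 0)
    (hb1 : (b 1 : ℤ) < aCF 1)
    (hble : ∀ k ≥ 1, (b k : ℤ) ≤ aCF k)
    (hbcons : ∀ k ≥ 2, (b k : ℤ) = aCF k → b (k - 1) = 0)
    (hMrep : (M : ℤ) = ∑ᶠ k : ℕ, (b (k + 1) : ℤ) * q k)
    (c : ℕ → ℕ)
    (hcfin : {k | c k ≠ 0}.Finite)
    (hc0 : c 0 = 0)
    (hc1 : (c 1 : ℤ) < aCF 1)
    (hcle : ∀ k ≥ 1, (c k : ℤ) ≤ aCF k)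
    (hccons : ∀ k ≥ 2, (c k : ℤ) = aCF k → c (k - 1) = 0)
    (hNrep : (N : ℤ) = ∑ᶠ k : ℕ, (c (k + 1) : ℤ) * q k)
    (hMN : M ≠ N) (n : ℕ) (hn : b n ≠ c n) (hnmax : ∀ m, n < m → b m = c m) :
    M < N ↔ b n < c n :=
  ostrowski_order_nat_general a ha aCF ζ hζ0 hfloor hζ q hq0 hq1 hqrec M N b hbfin hb0 hb1 hble
    hbcons hMrep c hcfin hc0 hc1 hcle hccons hNrep n hn hnmax
end

section
/- For every odd n ∈ ℕ, −β_n = β_{n-1} + (a_{n+1}−1)β_n + a_{n+3}β_{n+2} + a_{n+5}β_{n+4} + ⋯. -/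
/-!
The differences `β k` alternate in sign and decay geometrically: `ζ (k + 2) * β (k + 1) = -β k`
with complete quotients `ζ k > 1`, and `ζ (k + 2) * ζ (k + 3) ≥ 2`. The recursion
`β (k + 2) - β k = a_{k+2} β (k + 1)` turns the series into a telescoping sum of the summable
sequence `β (n + 1 + 2 j)`, whose value is `-β (n + 1)`; the claim is then the recursion for
`β (n + 1)`.
-/

open Filter

theorem Summable.hasSum_succ_sub {G : Type*} [AddCommGroup G] [TopologicalSpace G]
    [IsTopologicalAddGroup G] {g : ℕ → G} (hg : Summable g) :
    HasSum (fun j => g (j + 1) - g j) (-g 0) := by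
  have hshift : HasSum (fun j => g (j + 1)) (∑' j, g j - g 0) :=
    (hasSum_nat_add_iff 1).mpr (by simpa using hg.hasSum)
  simpa using hshift.sub hg.hasSum

section ContinuedFraction

variable {aCF : ℕ → ℤ} {ζ : ℕ → ℝ}

theorem irrational_completeQuotient (h0 : Irrational (ζ 0))
    (hζ : ∀ k, ζ k = (aCF k : ℝ) + 1 / ζ (k + 1)) (k : ℕ) : Irrational (ζ k) := by
  induction k with
  | zero => exact h0
  | succ k ih =>
    have hinv : (ζ (k + 1))⁻¹ = ζ k - aCF k := by rw [hζ k]; ring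
    exact Irrational.of_inv (hinv ▸ ih.sub_intCast _)

theorem one_lt_completeQuotient_succ {k : ℕ} (hirr : Irrational (ζ k))
    (hfloor : aCF k = ⌊ζ k⌋) (hζ : ζ k = (aCF k : ℝ) + 1 / ζ (k + 1)) : 1 < ζ (k + 1) := by
  have hfract : 1 / ζ (k + 1) = Int.fract (ζ k) := by
    rw [← Int.self_sub_floor, ← hfloor]; linarith
  have hpos : 0 < 1 / ζ (k + 1) := hfract ▸ Int.fract_pos.mpr (hirr.ne_int _)
  have hlt : 1 / ζ (k + 1) < 1 := hfract ▸ Int.fract_lt_one _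
  rwa [div_lt_one (one_div_pos.mp hpos)] at hlt

theorem one_le_partialQuotient {k : ℕ} (hfloor : aCF k = ⌊ζ k⌋) (hk : 1 < ζ k) :
    (1 : ℝ) ≤ aCF k := by
  rw [hfloor]
  exact_mod_cast Int.le_floor.mpr (by exact_mod_cast hk.le)

theorem completeQuotient_mul_succ_eq_neg {x : ℕ → ℝ}
    (hζ : ∀ k, ζ k = (aCF k : ℝ) + 1 / ζ (k + 1)) (hζne : ∀ k, ζ (k + 1) ≠ 0)
    (hrec : ∀ k, x (k + 2) = aCF (k + 2) * x (k + 1) + x k) (h1 : ζ 2 * x 1 = -x 0) :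
    ∀ k, ζ (k + 2) * x (k + 1) = -x k := by
  intro k
  induction k with
  | zero => exact h1
  | succ k ih =>
    have hstep : (aCF (k + 2) : ℝ) - ζ (k + 2) = -1 / ζ (k + 3) := by rw [hζ (k + 2)]; ring
    have hne := hζne (k + 2)
    calc ζ (k + 3) * x (k + 2) = ζ (k + 3) * x (k + 1) * (aCF (k + 2) - ζ (k + 2)) := by
          rw [hrec, ← neg_neg (x k), ← ih]; ring
      _ = -x (k + 1) := by rw [hstep]; field_simp

theorem abs_add_two_le_half {x : ℕ → ℝ}
    (hζ : ∀ k, ζ k = (aCF k : ℝ) + 1 / ζ (k + 1)) (hζgt : ∀ k, 1 < ζ (k + 1))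
    (ha : ∀ k, (1 : ℝ) ≤ aCF (k + 1)) (hx : ∀ k, ζ (k + 2) * x (k + 1) = -x k) (k : ℕ) :
    |x (k + 2)| ≤ |x k| / 2 := by
  have hζ3 := hζgt (k + 2)
  have hprod : ζ (k + 2) * ζ (k + 3) = aCF (k + 2) * ζ (k + 3) + 1 := by
    rw [hζ (k + 2)]; field_simp
  have htwo : 2 ≤ ζ (k + 2) * ζ (k + 3) := by nlinarith [ha (k + 1)]
  have hxk : x k = ζ (k + 2) * ζ (k + 3) * x (k + 2) := by
    linear_combination hx k - ζ (k + 2) * hx (k + 1)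
  rw [hxk, abs_mul, abs_of_pos (show 0 < ζ (k + 2) * ζ (k + 3) by linarith)]
  nlinarith [abs_nonneg (x (k + 2))]

theorem summable_comp_add_two_mul {x : ℕ → ℝ} (hx : ∀ k, |x (k + 2)| ≤ |x k| / 2) (m : ℕ) :
    Summable (fun j => x (m + 2 * j)) := by
  refine summable_of_ratio_norm_eventually_le (r := 1 / 2) (by norm_num) (Eventually.of_forall ?_)
  intro j
  simpa [Real.norm_eq_abs, mul_add, ← add_assoc, div_eq_inv_mul] using hx (m + 2 * j)

theorem hasSum_partialQuotient_mul_eq_neg {x : ℕ → ℝ}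
    (hrec : ∀ k, x (k + 2) = aCF (k + 2) * x (k + 1) + x k) (n : ℕ)
    (hx : Summable (fun j => x (n + 1 + 2 * j))) :
    HasSum (fun j => (aCF (n + 3 + 2 * j) : ℝ) * x (n + 2 + 2 * j)) (-x (n + 1)) := by
  have hterm (j : ℕ) : (aCF (n + 3 + 2 * j) : ℝ) * x (n + 2 + 2 * j) =
      x (n + 1 + 2 * (j + 1)) - x (n + 1 + 2 * j) := by
    rw [show n + 1 + 2 * (j + 1) = n + 1 + 2 * j + 2 by ring, hrec,
      show n + 1 + 2 * j + 2 = n + 3 + 2 * j by ring, show n + 1 + 2 * j + 1 = n + 2 + 2 * j by ring]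
    ring
  simpa only [hterm] using hx.hasSum_succ_sub

end ContinuedFraction

section Differences

variable {a : ℝ} {aCF : ℕ → ℤ} {p q : ℕ → ℤ} {β : ℕ → ℝ}

theorem beta_add_two (hqrec : ∀ k, q (k + 2) = aCF (k + 2) * q (k + 1) + q k)
    (hprec : ∀ k, p (k + 2) = aCF (k + 2) * p (k + 1) + p k)
    (hβ : ∀ k, β k = (q k : ℝ) * a - (p k : ℝ)) (k : ℕ) :
    β (k + 2) = aCF (k + 2) * β (k + 1) + β k := by
  simp only [hβ, hqrec, hprec]; push_cast; ring

theorem completeQuotient_two_mul_beta_one {ζ : ℕ → ℝ} (hζ0 : ζ 0 = a)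
    (hζ : ∀ k, ζ k = (aCF k : ℝ) + 1 / ζ (k + 1)) (hζne : ∀ k, ζ (k + 1) ≠ 0)
    (hq0 : q 0 = 1) (hq1 : q 1 = aCF 1) (hp0 : p 0 = aCF 0) (hp1 : p 1 = aCF 1 * aCF 0 + 1)
    (hβ : ∀ k, β k = (q k : ℝ) * a - (p k : ℝ)) : ζ 2 * β 1 = -β 0 := by
  have hβ0 : β 0 = 1 / ζ 1 := by rw [hβ, hq0, hp0, ← hζ0, hζ 0]; push_cast; ring
  have hβ1 : β 1 = aCF 1 * β 0 - 1 := by rw [hβ, hβ, hq0, hq1, hp0, hp1]; push_cast; ring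
  have h1 := hζ 1
  rw [hβ1, hβ0]
  field_simp [hζne 0, hζne 1] at h1 ⊢
  linear_combination -h1

end Differences

theorem neg_beta_series_odd (a : ℝ) (ha : Irrational a)
    (aCF : ℕ → ℤ) (ζ : ℕ → ℝ)
    (hζ0 : ζ 0 = a)
    (hfloor : ∀ k, aCF k = ⌊ζ k⌋)
    (hζ : ∀ k, ζ k = (aCF k : ℝ) + 1 / ζ (k + 1))
    (p q : ℕ → ℤ)
    (hq0 : q 0 = 1) (hq1 : q 1 = aCF 1)
    (hqrec : ∀ k, q (k + 2) = aCF (k + 2) * q (k + 1) + q k)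
    (hp0 : p 0 = aCF 0) (hp1 : p 1 = aCF 1 * aCF 0 + 1)
    (hprec : ∀ k, p (k + 2) = aCF (k + 2) * p (k + 1) + p k)
    (β : ℕ → ℝ)
    (hβ : ∀ k, β k = (q k : ℝ) * a - (p k : ℝ)) (n : ℕ) (hn : Odd n) :
    -β n = β (n - 1) + ((aCF (n + 1) : ℝ) - 1) * β n +
      ∑' j : ℕ, (aCF (n + 3 + 2 * j) : ℝ) * β (n + 2 + 2 * j) := by
  have hirr := irrational_completeQuotient (hζ0 ▸ ha) hζ
  have hζgt k := one_lt_completeQuotient_succ (hirr k) (hfloor k) (hζ k)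
  have hζne k : ζ (k + 1) ≠ 0 := (zero_lt_one.trans (hζgt k)).ne'
  have hrec := beta_add_two hqrec hprec hβ
  have hstep := completeQuotient_mul_succ_eq_neg hζ hζne hrec
    (completeQuotient_two_mul_beta_one hζ0 hζ hζne hq0 hq1 hp0 hp1 hβ)
  have hdecay := abs_add_two_le_half hζ hζgt
    (fun k => one_le_partialQuotient (hfloor (k + 1)) (hζgt k)) hstep
  rw [(hasSum_partialQuotient_mul_eq_neg hrec n (summable_comp_add_two_mul hdecay _)).tsum_eq]
  obtain ⟨m, rfl⟩ := hn
  rw [Nat.add_sub_cancel, show 2 * m + 1 + 1 = 2 * m + 2 from rfl, hrec]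
  ring
end

section
/- Suppose β_0 > 0. Let x ≠ y be real numbers with Ostrowski representations Σ_k b_{k+1}β_k and Σ_k c_{k+1}β_k, and let n be minimal with b_{n+1} ≠ c_{n+1}. Then x < y if and only if either (b_{n+1} > c_{n+1} and n is odd) or (c_{n+1} > b_{n+1} and n is even). -/
/-!
Put `θ k = (-1) ^ k * β k`. Then `θ k` is the product of the fractional parts `{ζ i}`, `i ≤ k`,
hence nonnegative, and the recurrence of the convergents becomes
`θ k = a_{k+2} θ (k + 1) + θ (k + 2)`. For digits bounded by the partial quotients this
recurrence telescopes: the signed tail `(-1) ^ (j + 1) * ∑_{k > j} b (k + 1) * β k` always lies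
in `[-θ (j + 1), θ j]`. After cancelling the common prefix, if `b (n + 1) < c (n + 1)` then
`c (n + 2) < a_{n+2}` by the digit rule, and the two tail bounds meet exactly, so
`(-1) ^ n * (x - y) ≤ 0`; the inequality is strict since `x ≠ y`.
-/

open Finset Filter Topology

namespace Ostrowski

def theta (β : ℕ → ℝ) (k : ℕ) : ℝ := (-1) ^ k * β k

section ContinuedFraction

variable {a : ℝ} {aCF : ℕ → ℤ} {ζ : ℕ → ℝ} {p q : ℕ → ℤ} {β : ℕ → ℝ}

theorem irrational_zeta (ha : Irrational a) (hζ0 : ζ 0 = a)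
    (hζ : ∀ k, ζ k = aCF k + 1 / ζ (k + 1)) (k : ℕ) : Irrational (ζ k) := by
  induction k with
  | zero => rwa [hζ0]
  | succ k ih =>
    have h : ζ (k + 1) = (ζ k - aCF k)⁻¹ := by rw [hζ k]; simp
    rw [h]
    exact (ih.sub_intCast _).inv

theorem fract_mul_zeta_succ (hfloor : ∀ k, aCF k = ⌊ζ k⌋)
    (hζ : ∀ k, ζ k = aCF k + 1 / ζ (k + 1)) (hirr : ∀ k, Irrational (ζ k)) (k : ℕ) :
    Int.fract (ζ k) * ζ (k + 1) = 1 := by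
  have hne := (hirr (k + 1)).ne_zero
  rw [Int.fract, ← hfloor, hζ k]
  field_simp
  ring

theorem theta_succ (hfloor : ∀ k, aCF k = ⌊ζ k⌋)
    (hfract : ∀ k, Int.fract (ζ k) * ζ (k + 1) = 1)
    (hβ0 : β 0 = Int.fract (ζ 0)) (hβ1 : β 1 = aCF 1 * β 0 - 1)
    (hβrec : ∀ k, β (k + 2) = aCF (k + 2) * β (k + 1) + β k) (k : ℕ) :
    theta β (k + 1) = Int.fract (ζ (k + 1)) * theta β k := by
  have hζ : ∀ k, ζ k = aCF k + Int.fract (ζ k) := fun k => by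
    rw [hfloor, Int.floor_add_fract]
  induction k with
  | zero =>
    simp only [theta]
    linear_combination -hβ1 - ζ 1 * hβ0 + β 0 * hζ 1 - hfract 0
  | succ k ih =>
    simp only [theta, pow_succ] at ih ⊢
    linear_combination (-1) ^ k * hβrec k - (-1) ^ k * β (k + 1) * hζ (k + 2) - ζ (k + 2) * ih
      - ((-1) ^ k * β k) * hfract (k + 1)

theorem theta_eq_prod_fract (hfloor : ∀ k, aCF k = ⌊ζ k⌋)
    (hfract : ∀ k, Int.fract (ζ k) * ζ (k + 1) = 1)
    (hβ0 : β 0 = Int.fract (ζ 0)) (hβ1 : β 1 = aCF 1 * β 0 - 1)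
    (hβrec : ∀ k, β (k + 2) = aCF (k + 2) * β (k + 1) + β k) (k : ℕ) :
    theta β k = ∏ i ∈ range (k + 1), Int.fract (ζ i) := by
  induction k with
  | zero => simp [theta, hβ0]
  | succ k ih =>
    rw [theta_succ hfloor hfract hβ0 hβ1 hβrec, ih, prod_range_succ _ (k + 1), mul_comm]

theorem convergent_error_rec (hqrec : ∀ k, q (k + 2) = aCF (k + 2) * q (k + 1) + q k)
    (hprec : ∀ k, p (k + 2) = aCF (k + 2) * p (k + 1) + p k)
    (hβ : ∀ k, β k = q k * a - p k) (k : ℕ) :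
    β (k + 2) = aCF (k + 2) * β (k + 1) + β k := by
  rw [hβ, hβ, hβ, hqrec, hprec]
  push_cast
  ring

theorem theta_nonneg_of_convergents (ha : Irrational a) (hζ0 : ζ 0 = a)
    (hfloor : ∀ k, aCF k = ⌊ζ k⌋) (hζ : ∀ k, ζ k = aCF k + 1 / ζ (k + 1))
    (hq0 : q 0 = 1) (hq1 : q 1 = aCF 1) (hqrec : ∀ k, q (k + 2) = aCF (k + 2) * q (k + 1) + q k)
    (hp0 : p 0 = aCF 0) (hp1 : p 1 = aCF 1 * aCF 0 + 1)
    (hprec : ∀ k, p (k + 2) = aCF (k + 2) * p (k + 1) + p k)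
    (hβ : ∀ k, β k = q k * a - p k) (k : ℕ) : 0 ≤ theta β k := by
  have hβ0 : β 0 = Int.fract (ζ 0) := by
    rw [hβ, hq0, hp0, hfloor, hζ0, Int.fract]
    push_cast
    ring
  have hβ1 : β 1 = aCF 1 * β 0 - 1 := by
    rw [hβ, hβ, hq1, hp1, hq0, hp0]
    push_cast
    ring
  rw [theta_eq_prod_fract hfloor (fract_mul_zeta_succ hfloor hζ (irrational_zeta ha hζ0 hζ)) hβ0
    hβ1 (convergent_error_rec hqrec hprec hβ)]
  exact prod_nonneg fun i _ => Int.fract_nonneg _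

end ContinuedFraction

section Parity

variable {R : Type*} [Ring R] [LinearOrder R] [IsStrictOrderedRing R] {u v : R} {n : ℕ}

theorem lt_iff_even_of_neg_one_pow_mul_le (hne : u ≠ v) (h : (-1) ^ n * u ≤ (-1) ^ n * v) :
    u < v ↔ Even n := by
  rcases n.even_or_odd with hn | hn
  · rw [hn.neg_one_pow, one_mul, one_mul] at h
    exact iff_of_true (h.lt_of_ne hne) hn
  · rw [hn.neg_one_pow, neg_one_mul, neg_one_mul, neg_le_neg_iff] at h
    exact iff_of_false h.not_gt (Nat.not_even_iff_odd.2 hn)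

theorem lt_iff_odd_of_neg_one_pow_mul_le (hne : u ≠ v) (h : (-1) ^ n * v ≤ (-1) ^ n * u) :
    u < v ↔ Odd n := by
  rw [← Nat.not_even_iff_odd, ← lt_iff_even_of_neg_one_pow_mul_le hne.symm h, not_lt,
    hne.le_iff_lt]

end Parity

section Tail

noncomputable def tail (β : ℕ → ℝ) (b : ℕ → ℕ) (j : ℕ) : ℝ :=
  ∑' i, (b (i + j + 1) : ℝ) * β (i + j)

def partialTail (β : ℕ → ℝ) (b : ℕ → ℕ) (j N : ℕ) : ℝ :=
  ∑ i ∈ range N, (b (i + j + 1) : ℝ) * β (i + j)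

variable {β : ℕ → ℝ} {a : ℕ → ℤ} {b : ℕ → ℕ}

theorem partialTail_succ (j N : ℕ) :
    partialTail β b j (N + 1) = b (j + 1) * β j + partialTail β b (j + 1) N := by
  rw [partialTail, sum_range_succ', add_comm, partialTail]
  simp only [Nat.zero_add, Nat.add_right_comm _ 1 j, Nat.add_assoc _ j 1]

theorem tail_eq_add_tail_succ (hb : Summable fun k => (b (k + 1) : ℝ) * β k) (j : ℕ) :
    tail β b j = b (j + 1) * β j + tail β b (j + 1) := by
  rw [tail, ((summable_nat_add_iff j).2 hb).tsum_eq_zero_add, tail]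
  simp only [Nat.zero_add, Nat.add_right_comm _ 1 j, Nat.add_assoc _ j 1]

theorem tendsto_partialTail (hb : Summable fun k => (b (k + 1) : ℝ) * β k) (j : ℕ) :
    Tendsto (partialTail β b j) atTop (𝓝 (tail β b j)) :=
  ((summable_nat_add_iff j).2 hb).hasSum.tendsto_sum_nat

theorem neg_one_pow_mul_digit_add (d j : ℕ) (X : ℝ) :
    (-1) ^ j * (d * β j + X) = d * theta β j - (-1) ^ (j + 1) * X := by
  rw [theta, pow_succ]
  ring

theorem theta_eq_mul_add (hrec : ∀ k, β (k + 2) = a (k + 2) * β (k + 1) + β k) (k : ℕ) :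
    theta β k = a (k + 2) * theta β (k + 1) + theta β (k + 2) := by
  simp only [theta, hrec, pow_succ]
  ring

theorem partialTail_mem_Icc (hθ : ∀ k, 0 ≤ theta β k)
    (hrec : ∀ k, β (k + 2) = a (k + 2) * β (k + 1) + β k) (N : ℕ) :
    ∀ j, (∀ k ≥ j + 2, (b k : ℤ) ≤ a k) →
      (-1) ^ (j + 1) * partialTail β b (j + 1) N ∈
        Set.Icc (-theta β (j + 1)) (theta β j) := by
  induction N with
  | zero => intro j _; simp [partialTail, hθ]
  | succ N ih =>
    intro j hb
    obtain ⟨hlo, hhi⟩ := ih (j + 1) fun k hk => hb k (by omega)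
    have hdigit : (b (j + 2) : ℝ) * theta β (j + 1) ≤ a (j + 2) * theta β (j + 1) :=
      mul_le_mul_of_nonneg_right (by exact_mod_cast hb (j + 2) le_rfl) (hθ (j + 1))
    have hdigit_nonneg : 0 ≤ (b (j + 2) : ℝ) * theta β (j + 1) :=
      mul_nonneg (Nat.cast_nonneg _) (hθ _)
    rw [partialTail_succ, neg_one_pow_mul_digit_add]
    exact ⟨by linarith, by linarith [theta_eq_mul_add hrec j]⟩

theorem tail_mem_Icc (hθ : ∀ k, 0 ≤ theta β k)
    (hrec : ∀ k, β (k + 2) = a (k + 2) * β (k + 1) + β k)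
    (hs : Summable fun k => (b (k + 1) : ℝ) * β k) {j : ℕ} (hb : ∀ k ≥ j + 2, (b k : ℤ) ≤ a k) :
    (-1) ^ (j + 1) * tail β b (j + 1) ∈ Set.Icc (-theta β (j + 1)) (theta β j) :=
  isClosed_Icc.mem_of_tendsto ((tendsto_partialTail hs (j + 1)).const_mul _)
    (Eventually.of_forall fun N => partialTail_mem_Icc hθ hrec N j hb)

theorem neg_one_pow_mul_tail_le (hθ : ∀ k, 0 ≤ theta β k)
    (hrec : ∀ k, β (k + 2) = a (k + 2) * β (k + 1) + β k) {c : ℕ → ℕ} {n : ℕ}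
    (hbs : Summable fun k => (b (k + 1) : ℝ) * β k)
    (hcs : Summable fun k => (c (k + 1) : ℝ) * β k)
    (hb : ∀ k ≥ n + 2, (b k : ℤ) ≤ a k) (hc : ∀ k ≥ n + 2, (c k : ℤ) ≤ a k)
    (hcons : (c (n + 2) : ℤ) = a (n + 2) → c (n + 1) = 0) (hlt : b (n + 1) < c (n + 1)) :
    (-1) ^ n * tail β b n ≤ (-1) ^ n * tail β c n := by
  have hc2 : (c (n + 2) : ℤ) + 1 ≤ a (n + 2) := by
    have := hc (n + 2) le_rfl
    omega
  have hc2θ : (c (n + 2) : ℝ) * theta β (n + 1) ≤ (a (n + 2) - 1) * theta β (n + 1) :=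
    mul_le_mul_of_nonneg_right (by exact_mod_cast le_sub_iff_add_le.2 hc2) (hθ (n + 1))
  have hc1θ : ((b (n + 1) : ℝ) + 1) * theta β n ≤ c (n + 1) * theta β n :=
    mul_le_mul_of_nonneg_right (by exact_mod_cast hlt) (hθ n)
  have hbtail := (tail_mem_Icc hθ hrec hbs hb).1
  have hctail := (tail_mem_Icc hθ hrec hcs (j := n + 1) fun k hk => hc k (by omega)).1
  calc (-1) ^ n * tail β b n
      = b (n + 1) * theta β n - (-1) ^ (n + 1) * tail β b (n + 1) := by
        rw [tail_eq_add_tail_succ hbs, neg_one_pow_mul_digit_add]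
    _ ≤ c (n + 1) * theta β n -
          (c (n + 2) * theta β (n + 1) - (-1) ^ (n + 2) * tail β c (n + 2)) := by
        linarith [theta_eq_mul_add hrec n]
    _ = (-1) ^ n * tail β c n := by
        rw [tail_eq_add_tail_succ hcs n, tail_eq_add_tail_succ hcs (n + 1),
          neg_one_pow_mul_digit_add, neg_one_pow_mul_digit_add]

end Tail

end Ostrowski

open Ostrowski

theorem ostrowski_order_real_general (a : ℝ) (ha : Irrational a)
    (aCF : ℕ → ℤ) (ζ : ℕ → ℝ)
    (hζ0 : ζ 0 = a)
    (hfloor : ∀ k, aCF k = ⌊ζ k⌋)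
    (hζ : ∀ k, ζ k = (aCF k : ℝ) + 1 / ζ (k + 1))
    (p q : ℕ → ℤ)
    (hq0 : q 0 = 1) (hq1 : q 1 = aCF 1)
    (hqrec : ∀ k, q (k + 2) = aCF (k + 2) * q (k + 1) + q k)
    (hp0 : p 0 = aCF 0) (hp1 : p 1 = aCF 1 * aCF 0 + 1)
    (hprec : ∀ k, p (k + 2) = aCF (k + 2) * p (k + 1) + p k)
    (β : ℕ → ℝ)
    (hβ : ∀ k, β k = (q k : ℝ) * a - (p k : ℝ))
    (x y : ℝ)
    (b : ℕ → ℕ)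
    (hble : ∀ k ≥ 1, (b k : ℤ) ≤ aCF k)
    (hbcons : ∀ k ≥ 1, (b (k + 1) : ℤ) = aCF (k + 1) → b k = 0)
    (hbsum : Summable (fun k : ℕ => (b (k + 1) : ℝ) * β k))
    (hxrep : x = ∑' k : ℕ, (b (k + 1) : ℝ) * β k)
    (c : ℕ → ℕ)
    (hcle : ∀ k ≥ 1, (c k : ℤ) ≤ aCF k)
    (hccons : ∀ k ≥ 1, (c (k + 1) : ℤ) = aCF (k + 1) → c k = 0)
    (hcsum : Summable (fun k : ℕ => (c (k + 1) : ℝ) * β k))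
    (hyrep : y = ∑' k : ℕ, (c (k + 1) : ℝ) * β k)
    (hxy : x ≠ y) (n : ℕ) (hn : b (n + 1) ≠ c (n + 1))
    (hnmin : ∀ m, m < n → b (m + 1) = c (m + 1)) :
    x < y ↔ (c (n + 1) < b (n + 1) ∧ Odd n) ∨ (b (n + 1) < c (n + 1) ∧ Even n) := by
  have hβrec := convergent_error_rec hqrec hprec hβ
  have hθ := theta_nonneg_of_convergents ha hζ0 hfloor hζ hq0 hq1 hqrec hp0 hp1 hprec hβ
  have hsplit : ∀ d : ℕ → ℕ, Summable (fun k => (d (k + 1) : ℝ) * β k) →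
      ∑' k, (d (k + 1) : ℝ) * β k = ∑ k ∈ range n, (d (k + 1) : ℝ) * β k + tail β d n :=
    fun d hd => (hd.sum_add_tsum_nat_add n).symm
  have hprefix : ∑ k ∈ range n, (b (k + 1) : ℝ) * β k = ∑ k ∈ range n, (c (k + 1) : ℝ) * β k :=
    sum_congr rfl fun k hk => by rw [hnmin k (mem_range.1 hk)]
  rw [hxrep, hyrep, hsplit b hbsum, hsplit c hcsum, hprefix] at hxy ⊢
  rw [add_lt_add_iff_left]
  have hne : tail β b n ≠ tail β c n := fun h => hxy (by rw [h])
  have hb : ∀ k ≥ n + 2, (b k : ℤ) ≤ aCF k := fun k hk => hble k (by omega)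
  have hc : ∀ k ≥ n + 2, (c k : ℤ) ≤ aCF k := fun k hk => hcle k (by omega)
  rcases lt_or_gt_of_ne hn with hlt | hlt
  · rw [lt_iff_even_of_neg_one_pow_mul_le hne
      (neg_one_pow_mul_tail_le hθ hβrec hbsum hcsum hb hc (hccons (n + 1) (by omega)) hlt)]
    simp [hlt, hlt.not_gt]
  · rw [lt_iff_odd_of_neg_one_pow_mul_le hne
      (neg_one_pow_mul_tail_le hθ hβrec hcsum hbsum hc hb (hbcons (n + 1) (by omega)) hlt)]
    simp [hlt, hlt.not_gt]

theorem ostrowski_order_real (a : ℝ) (ha : Irrational a)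
    (aCF : ℕ → ℤ) (ζ : ℕ → ℝ)
    (hζ0 : ζ 0 = a)
    (hfloor : ∀ k, aCF k = ⌊ζ k⌋)
    (hζ : ∀ k, ζ k = (aCF k : ℝ) + 1 / ζ (k + 1))
    (p q : ℕ → ℤ)
    (hq0 : q 0 = 1) (hq1 : q 1 = aCF 1)
    (hqrec : ∀ k, q (k + 2) = aCF (k + 2) * q (k + 1) + q k)
    (hp0 : p 0 = aCF 0) (hp1 : p 1 = aCF 1 * aCF 0 + 1)
    (hprec : ∀ k, p (k + 2) = aCF (k + 2) * p (k + 1) + p k)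
    (β : ℕ → ℝ)
    (hβ : ∀ k, β k = (q k : ℝ) * a - (p k : ℝ)) (hβ0 : 0 < β 0)
    (x y : ℝ)
    (b : ℕ → ℕ)
    (hb0 : b 0 = 0)
    (hb1 : (b 1 : ℤ) < aCF 1)
    (hble : ∀ k ≥ 1, (b k : ℤ) ≤ aCF k)
    (hbcons : ∀ k ≥ 1, (b (k + 1) : ℤ) = aCF (k + 1) → b k = 0)
    (hbinf : ∀ m, ∃ k ≥ m, Odd k ∧ (b k : ℤ) < aCF k)
    (hbsum : Summable (fun k : ℕ => (b (k + 1) : ℝ) * β k))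
    (hxrep : x = ∑' k : ℕ, (b (k + 1) : ℝ) * β k)
    (c : ℕ → ℕ)
    (hc0 : c 0 = 0)
    (hc1 : (c 1 : ℤ) < aCF 1)
    (hcle : ∀ k ≥ 1, (c k : ℤ) ≤ aCF k)
    (hccons : ∀ k ≥ 1, (c (k + 1) : ℤ) = aCF (k + 1) → c k = 0)
    (hcinf : ∀ m, ∃ k ≥ m, Odd k ∧ (c k : ℤ) < aCF k)
    (hcsum : Summable (fun k : ℕ => (c (k + 1) : ℝ) * β k))
    (hyrep : y = ∑' k : ℕ, (c (k + 1) : ℝ) * β k)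
    (hxy : x ≠ y) (n : ℕ) (hn : b (n + 1) ≠ c (n + 1))
    (hnmin : ∀ m, m < n → b (m + 1) = c (m + 1)) :
    x < y ↔ (c (n + 1) < b (n + 1) ∧ Odd n) ∨ (b (n + 1) < c (n + 1) ∧ Even n) :=
  ostrowski_order_real_general a ha aCF ζ hζ0 hfloor hζ p q hq0 hq1 hqrec hp0 hp1 hprec β hβ x y b
    hble hbcons hbsum hxrep c hcle hccons hcsum hyrep hxy n hn hnmin
end

section
/- Let n ∈ ℕ and let c be a real number with Ostrowski representation Σ_{k=0}^∞ b_{k+1}β_k. If −β_n < c < −(β_n + β_{n+1}) or −(β_n + β_{n+1}) < c < −β_n, then b_{k+1} = 0 for all k ≤ n. -/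
/-!
With complete quotients `ζ_k`, the errors `β_k = q_k a - p_k` satisfy `β_{k+1} ζ_{k+2} = -β_k` and
`β_{k+2} = a_{k+2} β_{k+1} + β_k`, so they alternate in sign and `|β_k|` decreases to `0`
(`ζ_{k+1} ζ_{k+2} ≥ 2`). Pairing consecutive terms, an admissible digit tail starting at index `m`
sums to a number on the same side of `-β_m` as `(-1)^m`. If `m ≤ n` is the first index with
`b_{m+1} ≠ 0`, then also `b_{m+2} < a_{m+2}`, which sharpens this to `(-1)^m (c + β_{m+1}) ≥ 0`;
comparing `|β_{m+1}|` with `|β_n|` and `|β_{n+1}|` then keeps `c` out of the open interval between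
`-β_n` and `-β_n - β_{n+1}`.
-/

open Filter Finset Topology

section CompleteQuotients

variable {ζ : ℕ → ℝ} {A : ℕ → ℤ}

theorem irrational_of_eq_add_one_div (hζ : ∀ k, ζ k = A k + 1 / ζ (k + 1))
    (h0 : Irrational (ζ 0)) (k : ℕ) : Irrational (ζ k) := by
  induction k with
  | zero => exact h0
  | succ k ih =>
    have hinv : (ζ (k + 1))⁻¹ = ζ k - A k := by rw [hζ k]; ring
    exact irrational_inv_iff.mp (hinv ▸ ih.sub_intCast (A k))

theorem one_lt_of_eq_floor_add_one_div (hfloor : ∀ k, A k = ⌊ζ k⌋)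
    (hζ : ∀ k, ζ k = A k + 1 / ζ (k + 1)) (h0 : Irrational (ζ 0)) (k : ℕ) :
    1 < ζ (k + 1) := by
  have hfract : (ζ (k + 1))⁻¹ = Int.fract (ζ k) := by
    rw [Int.fract, ← hfloor k, hζ k]; ring
  have hpos : 0 < (ζ (k + 1))⁻¹ :=
    hfract ▸ Int.fract_pos.mpr ((irrational_of_eq_add_one_div hζ h0 k).ne_int _)
  have hlt : (ζ (k + 1))⁻¹ < 1 := hfract ▸ Int.fract_lt_one _
  simpa using (one_lt_inv₀ hpos).mpr hlt

theorem two_le_mul_of_eq_floor_add_one_div (hfloor : ∀ k, A k = ⌊ζ k⌋)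
    (hζ : ∀ k, ζ k = A k + 1 / ζ (k + 1)) (hgt : ∀ k, 1 < ζ (k + 1)) (k : ℕ) :
    2 ≤ ζ (k + 1) * ζ (k + 2) := by
  have hA : (1 : ℝ) ≤ A (k + 1) := by
    rw [hfloor]; exact_mod_cast Int.le_floor.mpr (by exact_mod_cast (hgt k).le)
  have hmul : ζ (k + 1) * ζ (k + 2) = A (k + 1) * ζ (k + 2) + 1 := by
    rw [hζ (k + 1)]; field_simp [(zero_lt_one.trans (hgt (k + 1))).ne']
  nlinarith [hgt (k + 1)]

end CompleteQuotients

section ConvergentErrors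

variable {a : ℝ} {ζ β : ℕ → ℝ} {A p q : ℕ → ℤ}

theorem error_add_two (hβ : ∀ k, β k = (q k : ℝ) * a - (p k : ℝ))
    (hqrec : ∀ k, q (k + 2) = A (k + 2) * q (k + 1) + q k)
    (hprec : ∀ k, p (k + 2) = A (k + 2) * p (k + 1) + p k) (k : ℕ) :
    β (k + 2) = A (k + 2) * β (k + 1) + β k := by
  simp only [hβ, hqrec, hprec]; push_cast; ring

theorem error_zero_mul (hβ : ∀ k, β k = (q k : ℝ) * a - (p k : ℝ)) (hζ0 : ζ 0 = a)
    (hζ : ∀ k, ζ k = A k + 1 / ζ (k + 1)) (hne : ζ 1 ≠ 0) (hq0 : q 0 = 1) (hp0 : p 0 = A 0) :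
    β 0 * ζ 1 = 1 := by
  rw [hβ, hq0, hp0, ← hζ0, hζ 0]; field_simp; ring

theorem error_one_mul (hβ : ∀ k, β k = (q k : ℝ) * a - (p k : ℝ)) (hζ0 : ζ 0 = a)
    (hζ : ∀ k, ζ k = A k + 1 / ζ (k + 1)) (hne : ∀ k, ζ (k + 1) ≠ 0) (hq0 : q 0 = 1)
    (hq1 : q 1 = A 1) (hp0 : p 0 = A 0) (hp1 : p 1 = A 1 * A 0 + 1) :
    β 1 * ζ 2 = -β 0 := by
  have h0 := error_zero_mul hβ hζ0 hζ (hne 0) hq0 hp0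
  have h1 : ζ 1 * ζ 2 = A 1 * ζ 2 + 1 := by rw [hζ 1]; field_simp [hne 1]
  simp only [hβ, hq0, hq1, hp0, hp1] at h0 ⊢
  push_cast at h0 ⊢
  linear_combination ζ 2 * h0 - (a - A 0) * h1

theorem error_succ_mul (hζ : ∀ k, ζ k = A k + 1 / ζ (k + 1))
    (hne : ∀ k, ζ (k + 1) ≠ 0) (h1 : β 1 * ζ 2 = -β 0)
    (hrec : ∀ k, β (k + 2) = A (k + 2) * β (k + 1) + β k) (k : ℕ) :
    β (k + 1) * ζ (k + 2) = -β k := by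
  induction k with
  | zero => exact h1
  | succ k ih =>
    have E : ζ (k + 2) * ζ (k + 3) = A (k + 2) * ζ (k + 3) + 1 := by
      rw [hζ (k + 2)]; field_simp [hne (k + 2)]
    rw [hrec]
    linear_combination (-β (k + 1)) * E + ζ (k + 3) * ih

end ConvergentErrors

section Decay

variable {e r : ℕ → ℝ}

theorem pos_of_mul_eq (he : ∀ k, e (k + 1) * r k = e k) (hr : ∀ k, 0 < r k) (h0 : 0 < e 0)
    (k : ℕ) : 0 < e k := by
  induction k with
  | zero => exact h0
  | succ k ih => exact pos_of_mul_pos_left ((he k).symm ▸ ih) (hr k).le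

theorem antitone_of_mul_eq (he : ∀ k, e (k + 1) * r k = e k) (hr : ∀ k, 1 ≤ r k)
    (hpos : ∀ k, 0 < e k) : Antitone e :=
  antitone_nat_of_succ_le fun k => by nlinarith [he k, hr k, hpos (k + 1)]

theorem tendsto_zero_of_mul_eq (he : ∀ k, e (k + 1) * r k = e k) (hr : ∀ k, 1 ≤ r k)
    (hr2 : ∀ k, 2 ≤ r k * r (k + 1)) (hpos : ∀ k, 0 < e k) : Tendsto e atTop (𝓝 0) := by
  have hhalf : ∀ k, e (k + 2) ≤ e k / 2 := fun k => by
    rw [le_div_iff₀ two_pos, ← he k, ← he (k + 1)]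
    nlinarith [hr2 k, hpos (k + 2)]
  have hpow : ∀ N, e (2 * N) ≤ e 0 * (1 / 2) ^ N := fun N => by
    induction N with
    | zero => simp
    | succ N ih => rw [mul_add_one, pow_succ]; linarith [hhalf (2 * N)]
  have h2N : Tendsto (fun N : ℕ => 2 * N) atTop atTop := tendsto_id.const_mul_atTop' two_pos
  refine (tendsto_iff_tendsto_subseq_of_antitone (antitone_of_mul_eq he hr hpos) h2N).2 ?_
  refine squeeze_zero (fun N => (hpos _).le) hpow ?_
  simpa using (tendsto_pow_atTop_nhds_zero_of_lt_one (by norm_num : (0 : ℝ) ≤ 1 / 2)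
    (by norm_num)).const_mul (e 0)

end Decay

section OstrowskiSums

variable {β A d : ℕ → ℝ}

theorem neg_le_tsum_of_alternating (hrec : ∀ k, β (k + 2) = A (k + 2) * β (k + 1) + β k)
    (hsign : ∀ k, 0 ≤ (-1) ^ k * β k) (hlim : Tendsto β atTop (𝓝 0))
    (hd : ∀ k, 0 ≤ d k) (hdA : ∀ k, d (k + 2) ≤ A (k + 2))
    (hsum : Summable fun k => d (k + 1) * β k) :
    -β 0 ≤ ∑' k, d (k + 1) * β k := by
  -- each pair of terms is at least `β (2N + 2) - β (2N)`, so the partial sums telescope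
  have hpartial : ∀ N, β (2 * N) - β 0 ≤ ∑ j ∈ range (2 * N), d (j + 1) * β j := fun N => by
    induction N with
    | zero => simp
    | succ N ih =>
      have heven : 0 ≤ β (2 * N) := by simpa [pow_mul] using hsign (2 * N)
      have hodd : β (2 * N + 1) ≤ 0 := by simpa [pow_succ, pow_mul] using hsign (2 * N + 1)
      have h1 : 0 ≤ d (2 * N + 1) * β (2 * N) := mul_nonneg (hd _) heven
      have h2 : A (2 * N + 2) * β (2 * N + 1) ≤ d (2 * N + 2) * β (2 * N + 1) :=
        mul_le_mul_of_nonpos_right (hdA _) hodd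
      rw [mul_add_one, sum_range_succ, sum_range_succ, hrec]
      linarith
  have h2N : Tendsto (fun N : ℕ => 2 * N) atTop atTop := tendsto_id.const_mul_atTop' two_pos
  refine le_of_tendsto_of_tendsto' ?_ (hsum.hasSum.tendsto_sum_nat.comp h2N) hpartial
  simpa using (hlim.comp h2N).sub_const (β 0)

theorem neg_succ_le_tsum_of_alternating (hrec : ∀ k, β (k + 2) = A (k + 2) * β (k + 1) + β k)
    (hsign : ∀ k, 0 ≤ (-1) ^ k * β k) (hlim : Tendsto β atTop (𝓝 0))
    (hd : ∀ k, 0 ≤ d k) (hdA : ∀ k, d (k + 2) ≤ A (k + 2)) (hd1 : 1 ≤ d 1)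
    (hd2 : d 2 ≤ A 2 - 1) (hsum : Summable fun k => d (k + 1) * β k) :
    -β 1 ≤ ∑' k, d (k + 1) * β k := by
  have htail : -β 2 ≤ ∑' k, d (k + 2 + 1) * β (k + 2) :=
    neg_le_tsum_of_alternating (A := fun k => A (k + 2)) (d := fun k => d (k + 2))
      (fun k => hrec (k + 2)) (fun k => by simpa [pow_add] using hsign (k + 2))
      ((tendsto_add_atTop_iff_nat 2).2 hlim) (fun k => hd _) (fun k => hdA _)
      ((summable_nat_add_iff 2).2 hsum)
  have h0 : 0 ≤ β 0 := by simpa using hsign 0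
  have h1 : β 1 ≤ 0 := by simpa using hsign 1
  rw [← hsum.sum_add_tsum_nat_add 2, sum_range_succ, sum_range_one]
  nlinarith [hrec 0]

theorem neg_one_pow_mul_add_nonneg_of_first_digit (m : ℕ)
    (hrec : ∀ k, β (k + 2) = A (k + 2) * β (k + 1) + β k)
    (hsign : ∀ k, 0 ≤ (-1) ^ k * β k) (hlim : Tendsto β atTop (𝓝 0))
    (hd : ∀ k, 0 ≤ d k) (hdA : ∀ k, d (k + 2) ≤ A (k + 2)) (hzero : ∀ k < m, d (k + 1) = 0)
    (hd1 : 1 ≤ d (m + 1)) (hd2 : d (m + 2) ≤ A (m + 2) - 1)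
    (hsum : Summable fun k => d (k + 1) * β k) :
    0 ≤ (-1) ^ m * (∑' k, d (k + 1) * β k + β (m + 1)) := by
  have hshift : ∑' k, d (k + 1) * β k = ∑' k, d (k + 1 + m) * β (k + m) := by
    rw [← hsum.sum_add_tsum_nat_add m, sum_eq_zero fun k hk => by simp [hzero k (mem_range.1 hk)],
      zero_add]
    simp only [add_right_comm _ m 1]
  -- shifting by `m` and multiplying by `(-1) ^ m` restores the sign pattern of the errors
  have hm := neg_succ_le_tsum_of_alternating (β := fun k => (-1) ^ m * β (k + m))
    (A := fun k => A (k + m)) (d := fun k => d (k + m))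
    (fun k => by
      rw [show k + 2 + m = k + m + 2 by ring, show k + 1 + m = k + m + 1 by ring, hrec]; ring)
    (fun k => by simpa only [pow_add, mul_assoc] using hsign (k + m))
    (by simpa using ((tendsto_add_atTop_iff_nat m).2 hlim).const_mul ((-1) ^ m))
    (fun k => hd _) (fun k => by rw [show k + 2 + m = k + m + 2 by ring]; exact hdA _)
    (by rwa [add_comm]) (by rwa [add_comm])
    ((((summable_nat_add_iff m).2 hsum).mul_left ((-1) ^ m)).congr fun k => by
      rw [show k + 1 + m = k + m + 1 by ring]; ring)
  rw [show (fun k => d (k + 1 + m) * ((-1) ^ m * β (k + m))) =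
    fun k => (-1) ^ m * (d (k + 1 + m) * β (k + m)) from funext fun k => by ring, tsum_mul_left,
    ← hshift, add_comm 1 m] at hm
  linarith

end OstrowskiSums

theorem digit_le_sub_one_of_succ_ne_zero {b : ℕ → ℕ} {A : ℕ → ℤ}
    (hble : ∀ k ≥ 1, (b k : ℤ) ≤ A k) (hbcons : ∀ k ≥ 1, (b (k + 1) : ℤ) = A (k + 1) → b k = 0)
    {m : ℕ} (hm : b (m + 1) ≠ 0) : (b (m + 2) : ℝ) ≤ A (m + 2) - 1 := by
  have hle := hble (m + 2) (by omega)
  have hne : (b (m + 2) : ℤ) ≠ A (m + 2) := fun h => hm (hbcons (m + 1) (by omega) h)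
  exact_mod_cast (by omega : (b (m + 2) : ℤ) ≤ A (m + 2) - 1)

theorem not_between_of_neg_one_pow_mul_add_nonneg {β : ℕ → ℝ} {c : ℝ} {m n : ℕ}
    (hsign : ∀ k, 0 < (-1) ^ k * β k) (hanti : Antitone fun k => (-1) ^ k * β k) (hmn : m ≤ n)
    (hm : 0 ≤ (-1) ^ m * (c + β (m + 1))) :
    ¬((-β n < c ∧ c < -(β n + β (n + 1))) ∨ (-(β n + β (n + 1)) < c ∧ c < -β n)) := by
  have hn : (-1) ^ (n + 1) * β (n + 1) ≤ (-1) ^ n * β n := hanti n.le_succ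
  have hn1 := hsign (n + 1)
  have hm1 := hsign (m + 1)
  rw [pow_succ] at hn hn1 hm1
  -- if `m ≡ n mod 2` then `c` lies on the wrong side of `0`; otherwise `m < n` and
  -- `|β n| ≤ |β (m + 1)|` puts `c` beyond `-β n`
  obtain rfl | hlt := hmn.eq_or_lt
  · rcases neg_one_pow_eq_or ℝ m with h | h <;> simp only [h] at hn hn1 hm1 hm <;>
      rintro (⟨_, _⟩ | ⟨_, _⟩) <;> linarith
  · have hmn' : (-1) ^ n * β n ≤ (-1) ^ m * (-1) * β (m + 1) := pow_succ (-1 : ℝ) m ▸ hanti hlt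
    rcases neg_one_pow_eq_or ℝ m with h | h <;> rcases neg_one_pow_eq_or ℝ n with h' | h' <;>
      simp only [h, h'] at hn hn1 hm1 hm hmn' <;> rintro (⟨_, _⟩ | ⟨_, _⟩) <;> linarith

theorem small_ostrowski_digits_general (a : ℝ) (ha : Irrational a)
    (aCF : ℕ → ℤ) (ζ : ℕ → ℝ)
    (hζ0 : ζ 0 = a)
    (hfloor : ∀ k, aCF k = ⌊ζ k⌋)
    (hζ : ∀ k, ζ k = (aCF k : ℝ) + 1 / ζ (k + 1))
    (p q : ℕ → ℤ)
    (hq0 : q 0 = 1) (hq1 : q 1 = aCF 1)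
    (hqrec : ∀ k, q (k + 2) = aCF (k + 2) * q (k + 1) + q k)
    (hp0 : p 0 = aCF 0) (hp1 : p 1 = aCF 1 * aCF 0 + 1)
    (hprec : ∀ k, p (k + 2) = aCF (k + 2) * p (k + 1) + p k)
    (β : ℕ → ℝ)
    (hβ : ∀ k, β k = (q k : ℝ) * a - (p k : ℝ))
    (n : ℕ) (c : ℝ)
    (b : ℕ → ℕ)
    (hble : ∀ k ≥ 1, (b k : ℤ) ≤ aCF k)
    (hbcons : ∀ k ≥ 1, (b (k + 1) : ℤ) = aCF (k + 1) → b k = 0)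
    (hbsum : Summable (fun k : ℕ => (b (k + 1) : ℝ) * β k))
    (hcrep : c = ∑' k : ℕ, (b (k + 1) : ℝ) * β k)
    (hc : (-β n < c ∧ c < -(β n + β (n + 1))) ∨ (-(β n + β (n + 1)) < c ∧ c < -β n)) :
    ∀ k ≤ n, b (k + 1) = 0 := by
  have hgt : ∀ k, 1 < ζ (k + 1) := one_lt_of_eq_floor_add_one_div hfloor hζ (hζ0 ▸ ha)
  have hζpos : ∀ k, 0 < ζ (k + 1) := fun k => zero_lt_one.trans (hgt k)
  have hne : ∀ k, ζ (k + 1) ≠ 0 := fun k => (hζpos k).ne'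
  have hrec := error_add_two hβ hqrec hprec
  have hmul := error_succ_mul hζ hne (error_one_mul hβ hζ0 hζ hne hq0 hq1 hp0 hp1) hrec
  have he : ∀ k, (-1) ^ (k + 1) * β (k + 1) * ζ (k + 2) = (-1) ^ k * β k := fun k => by
    linear_combination (-(-1) ^ k : ℝ) * hmul k
  have hr : ∀ k, 1 ≤ ζ (k + 2) := fun k => (hgt (k + 1)).le
  have hβ0 : 0 < β 0 :=
    pos_of_mul_pos_left ((error_zero_mul hβ hζ0 hζ (hne 0) hq0 hp0).symm ▸ one_pos) (hζpos 0).le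
  have hpos : ∀ k, 0 < (-1) ^ k * β k :=
    pos_of_mul_eq he (fun k => hζpos (k + 1)) (by simpa using hβ0)
  have hlim : Tendsto β atTop (𝓝 0) := (tendsto_zero_iff_abs_tendsto_zero β).2 <| by
    simpa [Function.comp_def, abs_mul] using (tendsto_zero_of_mul_eq he hr
      (fun k => two_le_mul_of_eq_floor_add_one_div hfloor hζ hgt (k + 1)) hpos).abs
  by_contra! hbad
  obtain ⟨hmn, hm⟩ := Nat.find_spec hbad
  have hzero : ∀ k < Nat.find hbad, (b (k + 1) : ℝ) = 0 := fun k hk => by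
    by_contra h
    exact Nat.find_min hbad hk ⟨by omega, by exact_mod_cast h⟩
  refine not_between_of_neg_one_pow_mul_add_nonneg hpos (antitone_of_mul_eq he hr hpos) hmn ?_ hc
  rw [hcrep]
  exact neg_one_pow_mul_add_nonneg_of_first_digit (A := fun k => (aCF k : ℝ)) _ hrec
    (fun k => (hpos k).le) hlim (fun k => Nat.cast_nonneg _)
    (fun k => by exact_mod_cast hble (k + 2) (by omega)) hzero
    (by exact_mod_cast Nat.one_le_iff_ne_zero.mpr hm)
    (digit_le_sub_one_of_succ_ne_zero hble hbcons hm) hbsum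

theorem small_ostrowski_digits (a : ℝ) (ha : Irrational a)
    (aCF : ℕ → ℤ) (ζ : ℕ → ℝ)
    (hζ0 : ζ 0 = a)
    (hfloor : ∀ k, aCF k = ⌊ζ k⌋)
    (hζ : ∀ k, ζ k = (aCF k : ℝ) + 1 / ζ (k + 1))
    (p q : ℕ → ℤ)
    (hq0 : q 0 = 1) (hq1 : q 1 = aCF 1)
    (hqrec : ∀ k, q (k + 2) = aCF (k + 2) * q (k + 1) + q k)
    (hp0 : p 0 = aCF 0) (hp1 : p 1 = aCF 1 * aCF 0 + 1)
    (hprec : ∀ k, p (k + 2) = aCF (k + 2) * p (k + 1) + p k)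
    (β : ℕ → ℝ)
    (hβ : ∀ k, β k = (q k : ℝ) * a - (p k : ℝ)) (h1 : 3 / 2 < a) (h2 : a < 2)
    (n : ℕ) (c : ℝ)
    (b : ℕ → ℕ)
    (hb0 : b 0 = 0)
    (hb1 : (b 1 : ℤ) < aCF 1)
    (hble : ∀ k ≥ 1, (b k : ℤ) ≤ aCF k)
    (hbcons : ∀ k ≥ 1, (b (k + 1) : ℤ) = aCF (k + 1) → b k = 0)
    (hbinf : ∀ m, ∃ k ≥ m, Odd k ∧ (b k : ℤ) < aCF k)
    (hbsum : Summable (fun k : ℕ => (b (k + 1) : ℝ) * β k))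
    (hcrep : c = ∑' k : ℕ, (b (k + 1) : ℝ) * β k)
    (hc : (-β n < c ∧ c < -(β n + β (n + 1))) ∨ (-(β n + β (n + 1)) < c ∧ c < -β n)) :
    ∀ k ≤ n, b (k + 1) = 0 :=
  small_ostrowski_digits_general a ha aCF ζ hζ0 hfloor hζ p q hq0 hq1 hqrec hp0 hp1 hprec β hβ n c b
    hble hbcons hbsum hcrep hc
end

section
/- The continued fraction expansion of an irrational real number a is eventually periodic if and only if a is a quadratic irrational (a root of a quadratic polynomial with rational coefficients). -/
/-!
Write `ζ k` for the complete quotients of `a` and `p k / q k` for its convergents, so that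
`a * (q (k + 1) * ζ (k + 2) + q k) = p (k + 1) * ζ (k + 2) + p k`.

If the partial quotients are eventually periodic, two complete quotients `ζ (i + 2) = ζ (j + 2)`
coincide, because a real number is the limit of its convergents and hence determined by its partial
quotients. Eliminating this common value from the two identities above gives a quadratic equation
for `a`; its leading coefficient `q j * q (i + 1) - q i * q (j + 1)` is nonzero because consecutive
denominators are coprime and the `q (k + 1)` increase strictly.

Conversely, let `F` be an integral binary quadratic form with `F (a, 1) = 0`. Then `ζ (k + 2)` is a
root of `F (p (k + 1), q (k + 1)) X² + B X + F (p k, q k)`, whose leading coefficient does not vanish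
as `a` is irrational, and whose coefficients are bounded independently of `k` because
`|q k * a - p k| ≤ 1 / q (k + 1)`. So the complete quotients take only finitely many values; two of
them coincide, and from there on the expansion repeats.
-/

theorem exists_int_quadratic_of_rat {a : ℝ} {c₂ c₁ c₀ : ℚ} (hc₂ : c₂ ≠ 0)
    (h : (c₂ : ℝ) * a ^ 2 + c₁ * a + c₀ = 0) :
    ∃ d₂ d₁ d₀ : ℤ, d₂ ≠ 0 ∧ (d₂ : ℝ) * a ^ 2 + d₁ * a + d₀ = 0 := by
  have hnum : ∀ c : ℚ, (c.num : ℝ) = c * c.den := fun c => by exact_mod_cast c.mul_den_eq_num.symm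
  refine ⟨c₂.num * c₁.den * c₀.den, c₁.num * c₂.den * c₀.den, c₀.num * c₂.den * c₁.den,
    by simp [hc₂], ?_⟩
  push_cast
  rw [hnum, hnum, hnum]
  linear_combination (c₂.den * c₁.den * c₀.den : ℝ) * h

open Polynomial in
theorem finite_setOf_quadratic_root (N : ℤ) :
    {x : ℝ | ∃ u v w : ℤ, u ≠ 0 ∧ |u| ≤ N ∧ |v| ≤ N ∧ |w| ≤ N ∧
      (u : ℝ) * x ^ 2 + v * x + w = 0}.Finite := by
  let T := (Finset.Icc (-N) N ×ˢ Finset.Icc (-N) N ×ˢ Finset.Icc (-N) N).filter (·.1 ≠ 0)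
  refine (T.finite_toSet.biUnion fun t ht => finite_setOfPred_isRoot
    (p := C (t.1 : ℝ) * X ^ 2 + C (t.2.1 : ℝ) * X + C (t.2.2 : ℝ)) ?_).subset ?_
  · intro hp
    have h₂ := congrArg (coeff · 2) hp
    simp only [coeff_add, coeff_C_mul_X_pow, coeff_C_mul_X, coeff_C] at h₂
    exact (Finset.mem_filter.1 ht).2 (by simpa using h₂)
  · rintro x ⟨u, v, w, hu, hu', hv, hw, hx⟩
    simp only [Set.mem_iUnion]
    exact ⟨(u, v, w), by simp [T, abs_le.1, *], by simp [hx]⟩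

def quadForm {R : Type*} [CommRing R] (d₂ d₁ d₀ x y : R) : R :=
  d₂ * x ^ 2 + d₁ * x * y + d₀ * y ^ 2

@[simp, norm_cast]
theorem Int.cast_quadForm {R : Type*} [CommRing R] (d₂ d₁ d₀ x y : ℤ) :
    ((quadForm d₂ d₁ d₀ x y : ℤ) : R) = quadForm (d₂ : R) d₁ d₀ x y := by
  simp [quadForm]

section QuadForm

variable {a d₂ d₁ d₀ : ℝ}

theorem quadForm_eq_of_root (hroot : d₂ * a ^ 2 + d₁ * a + d₀ = 0) (x y : ℝ) :
    quadForm d₂ d₁ d₀ x y = (y * a - x) * (d₂ * (y * a - x) - y * (2 * d₂ * a + d₁)) := by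
  unfold quadForm
  linear_combination y ^ 2 * hroot

theorem abs_quadForm_le (hroot : d₂ * a ^ 2 + d₁ * a + d₀ = 0) {x y C : ℝ} (hy : 0 ≤ y)
    (hC : |y * a - x| ≤ C) (hCy : |y * a - x| * y ≤ C) :
    |quadForm d₂ d₁ d₀ x y| ≤ C * (C * |d₂| + |2 * d₂ * a + d₁|) := by
  rw [quadForm_eq_of_root hroot, abs_mul]
  have hC₀ : 0 ≤ C := (abs_nonneg _).trans hC
  calc |y * a - x| * |d₂ * (y * a - x) - y * (2 * d₂ * a + d₁)|
      ≤ |y * a - x| * (|d₂| * |y * a - x| + y * |2 * d₂ * a + d₁|) := by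
        gcongr
        refine (abs_sub _ _).trans_eq ?_
        rw [abs_mul, abs_mul, abs_of_nonneg hy]
    _ = |d₂| * (|y * a - x| * |y * a - x|) + (|y * a - x| * y) * |2 * d₂ * a + d₁| := by ring
    _ ≤ |d₂| * (C * C) + C * |2 * d₂ * a + d₁| := by gcongr
    _ = C * (C * |d₂| + |2 * d₂ * a + d₁|) := by ring

-- The left side is `quadForm d₂ d₁ d₀ (x * z + x') (y * z + y')` expanded in powers of `z`.
theorem quadForm_add_mul_add_eq_zero (hroot : d₂ * a ^ 2 + d₁ * a + d₀ = 0) {x y x' y' z : ℝ}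
    (h : a * (y * z + y') = x * z + x') :
    quadForm d₂ d₁ d₀ x y * z ^ 2
      + (quadForm d₂ d₁ d₀ (x + x') (y + y') - quadForm d₂ d₁ d₀ x y - quadForm d₂ d₁ d₀ x' y') * z
      + quadForm d₂ d₁ d₀ x' y' = 0 := by
  unfold quadForm
  linear_combination (y * z + y') ^ 2 * hroot
    - (d₂ * (a * (y * z + y') + x * z + x') + d₁ * (y * z + y')) * h

theorem quadForm_ne_zero (ha : Irrational a) {d₂ d₁ d₀ : ℤ} (hd₂ : d₂ ≠ 0)
    (hroot : (d₂ : ℝ) * a ^ 2 + d₁ * a + d₀ = 0) {x y : ℤ} (hy : y ≠ 0) :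
    quadForm d₂ d₁ d₀ x y ≠ 0 := by
  intro hF
  have hF : quadForm (d₂ : ℝ) d₁ d₀ x y = 0 := by exact_mod_cast hF
  rw [quadForm_eq_of_root hroot] at hF
  rcases mul_eq_zero.1 hF with h | h
  · exact ha.ne_rational x y (by field_simp; linarith)
  · exact ha.ne_rational (-(d₂ * x + d₁ * y)) (d₂ * y) (by push_cast; field_simp; linarith)

end QuadForm

structure IsCompleteQuotients (a : ℝ) (aCF : ℕ → ℤ) (ζ : ℕ → ℝ) : Prop where
  zero : ζ 0 = a
  floor_eq : ∀ k, aCF k = ⌊ζ k⌋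
  eq_add_inv : ∀ k, ζ k = aCF k + 1 / ζ (k + 1)

structure IsConvergents (aCF p q : ℕ → ℤ) : Prop where
  q_zero : q 0 = 1
  q_one : q 1 = aCF 1
  q_add_two : ∀ k, q (k + 2) = aCF (k + 2) * q (k + 1) + q k
  p_zero : p 0 = aCF 0
  p_one : p 1 = aCF 1 * aCF 0 + 1
  p_add_two : ∀ k, p (k + 2) = aCF (k + 2) * p (k + 1) + p k

namespace IsCompleteQuotients

variable {a : ℝ} {aCF : ℕ → ℤ} {ζ : ℕ → ℝ}

theorem succ_eq_inv_fract (h : IsCompleteQuotients a aCF ζ) (k : ℕ) :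
    ζ (k + 1) = (Int.fract (ζ k))⁻¹ := by
  rw [Int.fract, ← h.floor_eq, h.eq_add_inv k, add_sub_cancel_left, one_div, inv_inv]

theorem add_eq_of_eq (h : IsCompleteQuotients a aCF ζ) {i j : ℕ} (hij : ζ i = ζ j) (n : ℕ) :
    ζ (i + n) = ζ (j + n) := by
  induction n with
  | zero => exact hij
  | succ n ih => rw [← add_assoc, ← add_assoc, h.succ_eq_inv_fract, h.succ_eq_inv_fract, ih]

theorem irrational (h : IsCompleteQuotients a aCF ζ) (ha : Irrational a) (k : ℕ) :
    Irrational (ζ k) := by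
  induction k with
  | zero => rwa [h.zero]
  | succ k ih => rw [h.succ_eq_inv_fract, Int.fract]; exact (ih.sub_intCast _).inv

theorem fract_pos (h : IsCompleteQuotients a aCF ζ) (ha : Irrational a) (k : ℕ) :
    0 < Int.fract (ζ k) :=
  Int.fract_pos.2 ((h.irrational ha k).ne_int _)

theorem one_lt (h : IsCompleteQuotients a aCF ζ) (ha : Irrational a) (k : ℕ) :
    1 < ζ (k + 1) := by
  rw [h.succ_eq_inv_fract]
  exact one_lt_inv_iff₀.2 ⟨h.fract_pos ha k, Int.fract_lt_one _⟩

theorem one_le_aCF (h : IsCompleteQuotients a aCF ζ) (ha : Irrational a) (k : ℕ) :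
    1 ≤ aCF (k + 1) := by
  rw [h.floor_eq]
  exact Int.le_floor.2 (by exact_mod_cast (h.one_lt ha k).le)

theorem mul_succ (h : IsCompleteQuotients a aCF ζ) (ha : Irrational a) (k : ℕ) :
    ζ k * ζ (k + 1) = aCF k * ζ (k + 1) + 1 := by
  have := (zero_lt_one.trans (h.one_lt ha k)).ne'
  rw [h.eq_add_inv k]
  field_simp

theorem of_s_get? (h : IsCompleteQuotients a aCF ζ) (ha : Irrational a) (n i : ℕ) :
    (GenContFract.of (ζ i)).s.get? n = some ⟨1, aCF (i + n + 1)⟩ := by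
  induction n generalizing i with
  | zero =>
    rw [← Stream'.Seq.head.eq_1, GenContFract.of_s_head (h.fract_pos ha i).ne',
      ← h.succ_eq_inv_fract, h.floor_eq]
  | succ n ih =>
    rw [GenContFract.of_s_succ, ← h.succ_eq_inv_fract, ih, add_right_comm i 1 n]
    rfl

theorem eq_iff (h : IsCompleteQuotients a aCF ζ) (ha : Irrational a) (i j : ℕ) :
    ζ i = ζ j ↔ ∀ n, aCF (i + n) = aCF (j + n) := by
  refine ⟨fun hij n => by rw [h.floor_eq, h.floor_eq, h.add_eq_of_eq hij], fun hdig => ?_⟩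
  have hof : GenContFract.of (ζ i) = GenContFract.of (ζ j) := by
    refine GenContFract.ext ?_ (Stream'.Seq.ext fun n => ?_)
    · simpa [GenContFract.of_h_eq_floor, h.floor_eq] using hdig 0
    · rw [h.of_s_get? ha, h.of_s_get? ha, add_assoc, add_assoc, hdig]
  exact tendsto_nhds_unique (GenContFract.of_convergence (ζ i))
    (hof ▸ GenContFract.of_convergence (ζ j))

theorem eventually_periodic_iff (h : IsCompleteQuotients a aCF ζ) (ha : Irrational a) :
    (∃ ξ ν : ℕ, 0 < ν ∧ ∀ k, ξ < k → aCF (k + ν) = aCF k) ↔ ∃ i j, i < j ∧ ζ i = ζ j := by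
  constructor
  · rintro ⟨ξ, ν, hν, hper⟩
    refine ⟨ξ + 1, ξ + 1 + ν, by omega, (h.eq_iff ha _ _).2 fun n => ?_⟩
    rw [← hper (ξ + 1 + n) (by omega), add_right_comm]
  · rintro ⟨i, j, hij, hζij⟩
    refine ⟨i, j - i, by omega, fun k hk => ?_⟩
    obtain ⟨n, rfl⟩ := Nat.exists_eq_add_of_lt hk
    rw [show i + n + 1 + (j - i) = j + (n + 1) by omega, ← (h.eq_iff ha i j).1 hζij, add_assoc]

end IsCompleteQuotients

namespace IsConvergents

variable {aCF p q : ℕ → ℤ}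

theorem det (hc : IsConvergents aCF p q) (k : ℕ) :
    p (k + 1) * q k - p k * q (k + 1) = (-1) ^ k := by
  induction k with
  | zero => rw [hc.p_zero, hc.p_one, hc.q_zero, hc.q_one]; ring
  | succ k ih => rw [hc.p_add_two, hc.q_add_two, pow_succ]; linear_combination -ih

theorem isCoprime_q (hc : IsConvergents aCF p q) (k : ℕ) : IsCoprime (q k) (q (k + 1)) := by
  induction k with
  | zero => rw [hc.q_zero]; exact isCoprime_one_left
  | succ k ih => rw [hc.q_add_two]; exact ih.symm.mul_add_right_right _

theorem one_le_q (hc : IsConvergents aCF p q) (hdig : ∀ k, 1 ≤ aCF (k + 1)) (k : ℕ) :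
    1 ≤ q k := by
  suffices ∀ k, 1 ≤ q k ∧ 1 ≤ q (k + 1) from (this k).1
  intro k
  induction k with
  | zero => exact ⟨hc.q_zero.ge, hc.q_one ▸ hdig 0⟩
  | succ k ih => exact ⟨ih.2, by rw [hc.q_add_two]; nlinarith [hdig (k + 1)]⟩

theorem strictMono_q_succ (hc : IsConvergents aCF p q) (hdig : ∀ k, 1 ≤ aCF (k + 1)) :
    StrictMono fun k => q (k + 1) :=
  strictMono_nat_of_lt_succ fun k => by
    rw [hc.q_add_two]; nlinarith [hdig (k + 1), hc.one_le_q hdig k, hc.one_le_q hdig (k + 1)]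

theorem monotone_q (hc : IsConvergents aCF p q) (hdig : ∀ k, 1 ≤ aCF (k + 1)) : Monotone q := by
  refine monotone_nat_of_le_succ fun k => ?_
  cases k with
  | zero => rw [hc.q_zero, hc.q_one]; exact hdig 0
  | succ k => exact (hc.strictMono_q_succ hdig (Nat.lt_succ_self k)).le

theorem q_mul_q_succ_ne (hc : IsConvergents aCF p q) (hdig : ∀ k, 1 ≤ aCF (k + 1)) {i j : ℕ}
    (hij : i < j) : q j * q (i + 1) ≠ q i * q (j + 1) := by
  intro heq
  have h₁ : q (i + 1) ∣ q (j + 1) :=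
    (hc.isCoprime_q i).symm.dvd_of_dvd_mul_left ⟨q j, by linarith⟩
  have h₂ : q (j + 1) ∣ q (i + 1) :=
    (hc.isCoprime_q j).symm.dvd_of_dvd_mul_left ⟨q i, by linarith⟩
  have := Int.dvd_antisymm (by linarith [hc.one_le_q hdig (i + 1)])
    (by linarith [hc.one_le_q hdig (j + 1)]) h₁ h₂
  exact (hc.strictMono_q_succ hdig hij).ne this

end IsConvergents

namespace IsCompleteQuotients

variable {a : ℝ} {aCF p q : ℕ → ℤ} {ζ : ℕ → ℝ}

theorem mul_q_add (h : IsCompleteQuotients a aCF ζ) (hc : IsConvergents aCF p q)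
    (ha : Irrational a) (k : ℕ) :
    a * (q (k + 1) * ζ (k + 2) + q k) = p (k + 1) * ζ (k + 2) + p k := by
  induction k with
  | zero =>
    have h₀ : a * ζ 1 = aCF 0 * ζ 1 + 1 := by have := h.mul_succ ha 0; rwa [h.zero] at this
    have h₁ : ζ 1 * ζ 2 = aCF 1 * ζ 2 + 1 := h.mul_succ ha 1
    rw [hc.q_zero, hc.q_one, hc.p_zero, hc.p_one]
    push_cast
    linear_combination ζ 2 * h₀ - (a - aCF 0) * h₁
  | succ k ih =>
    have h₂ : ζ (k + 2) * ζ (k + 3) = aCF (k + 2) * ζ (k + 3) + 1 := h.mul_succ ha (k + 2)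
    show a * (q (k + 2) * ζ (k + 3) + q (k + 1)) = p (k + 2) * ζ (k + 3) + p (k + 1)
    rw [hc.q_add_two, hc.p_add_two]
    push_cast
    linear_combination ζ (k + 3) * ih - (q (k + 1) * a - p (k + 1)) * h₂

theorem abs_sub_mul_le (h : IsCompleteQuotients a aCF ζ) (hc : IsConvergents aCF p q)
    (ha : Irrational a) {k n : ℕ} (hn : n ≤ k + 1) : |q k * a - p k| * q n ≤ 1 := by
  have hdig := h.one_le_aCF ha
  have hz : 1 < ζ (k + 2) := h.one_lt ha (k + 1)
  have hq : (1 : ℝ) ≤ q k := by exact_mod_cast hc.one_le_q hdig k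
  have hq' : (1 : ℝ) ≤ q (k + 1) := by exact_mod_cast hc.one_le_q hdig (k + 1)
  have hqn : (q n : ℝ) ≤ q (k + 1) := by exact_mod_cast hc.monotone_q hdig hn
  have hdet : (p (k + 1) * q k - p k * q (k + 1) : ℝ) = (-1) ^ k := by exact_mod_cast hc.det k
  have hβ : |q k * a - p k| * (q (k + 1) * ζ (k + 2) + q k) = ζ (k + 2) := by
    have : (q k * a - p k) * (q (k + 1) * ζ (k + 2) + q k) = (-1) ^ k * ζ (k + 2) := by
      linear_combination (q k : ℝ) * h.mul_q_add hc ha k + ζ (k + 2) * hdet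
    rw [← abs_of_pos (by nlinarith : 0 < (q (k + 1) * ζ (k + 2) + q k : ℝ)), ← abs_mul, this,
      abs_mul, abs_neg_one_pow, one_mul, abs_of_pos (by linarith)]
  have hβ₀ := abs_nonneg ((q k : ℝ) * a - p k)
  have hβq : |q k * a - p k| * q (k + 1) ≤ 1 := by nlinarith
  exact (mul_le_mul_of_nonneg_left hqn hβ₀).trans hβq

theorem exists_rat_quadratic_of_eq (h : IsCompleteQuotients a aCF ζ)
    (hc : IsConvergents aCF p q) (ha : Irrational a) {i j : ℕ} (hij : i < j)
    (heq : ζ (i + 2) = ζ (j + 2)) :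
    ∃ c₂ c₁ c₀ : ℚ, c₂ ≠ 0 ∧ (c₂ : ℝ) * a ^ 2 + c₁ * a + c₀ = 0 := by
  refine ⟨q j * q (i + 1) - q i * q (j + 1),
    p i * q (j + 1) + q i * p (j + 1) - q (i + 1) * p j - p (i + 1) * q j,
    p (i + 1) * p j - p i * p (j + 1), ?_, ?_⟩
  · exact_mod_cast sub_ne_zero.2 (hc.q_mul_q_succ_ne (h.one_le_aCF ha) hij)
  · push_cast
    linear_combination (q (i + 1) * a - p (i + 1)) * h.mul_q_add hc ha j
      - (q (j + 1) * a - p (j + 1)) * h.mul_q_add hc ha i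
      + (q (i + 1) * a - p (i + 1)) * (q (j + 1) * a - p (j + 1)) * heq

theorem exists_abs_quadForm_le (h : IsCompleteQuotients a aCF ζ) (hc : IsConvergents aCF p q)
    (ha : Irrational a) {d₂ d₁ d₀ : ℤ} (hroot : (d₂ : ℝ) * a ^ 2 + d₁ * a + d₀ = 0) :
    ∃ N : ℤ, ∀ k, |quadForm d₂ d₁ d₀ (p k) (q k)| ≤ N ∧
      |quadForm d₂ d₁ d₀ (p (k + 1) + p k) (q (k + 1) + q k)| ≤ N := by
  have hβ : ∀ {k n}, n ≤ k + 1 → |q k * a - p k| * q n ≤ 1 := h.abs_sub_mul_le hc ha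
  have hβ₁ : ∀ k, |q k * a - p k| ≤ 1 := fun k => by
    simpa [hc.q_zero] using hβ (Nat.zero_le (k + 1))
  have hq : ∀ k, (0 : ℝ) ≤ q k := fun k => by
    exact_mod_cast (zero_lt_one.trans_le (hc.one_le_q (h.one_le_aCF ha) k)).le
  refine ⟨⌈4 * (4 * |(d₂ : ℝ)| + |2 * d₂ * a + d₁|)⌉, fun k => ⟨?_, ?_⟩⟩ <;>
    refine Int.cast_le.1 (le_trans ?_ (Int.le_ceil _)) <;> push_cast [Int.cast_abs]
  · refine abs_quadForm_le hroot (hq k) ?_ ?_ <;> linarith [hβ₁ k, hβ k.le_succ]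
  · have hsum : ((q (k + 1) + q k : ℝ)) * a - (p (k + 1) + p k)
        = (q (k + 1) * a - p (k + 1)) + (q k * a - p k) := by ring
    have htri := abs_add_le ((q (k + 1) : ℝ) * a - p (k + 1)) (q k * a - p k)
    refine abs_quadForm_le hroot (by linarith [hq k, hq (k + 1)]) ?_ ?_ <;> rw [hsum]
    · linarith [hβ₁ k, hβ₁ (k + 1)]
    · calc _ ≤ (|(q (k + 1) : ℝ) * a - p (k + 1)| + |(q k : ℝ) * a - p k|) * (q (k + 1) + q k) :=
            mul_le_mul_of_nonneg_right htri (by linarith [hq k, hq (k + 1)])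
        _ = |(q (k + 1) : ℝ) * a - p (k + 1)| * q (k + 1)
              + |(q (k + 1) : ℝ) * a - p (k + 1)| * q k
              + |(q k : ℝ) * a - p k| * q (k + 1) + |(q k : ℝ) * a - p k| * q k := by ring
        _ ≤ 4 := by
          linarith [hβ (k := k + 1) (n := k + 1) (by omega), hβ (k := k + 1) (n := k) (by omega),
            hβ (k := k) (n := k + 1) le_rfl, hβ (k := k) (n := k) (by omega)]

theorem exists_lt_eq_of_quadratic (h : IsCompleteQuotients a aCF ζ) (hc : IsConvergents aCF p q)
    (ha : Irrational a) {d₂ d₁ d₀ : ℤ} (hd₂ : d₂ ≠ 0)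
    (hroot : (d₂ : ℝ) * a ^ 2 + d₁ * a + d₀ = 0) : ∃ i j, i < j ∧ ζ i = ζ j := by
  set F : ℤ → ℤ → ℤ := quadForm d₂ d₁ d₀ with hF
  obtain ⟨N, hN⟩ := h.exists_abs_quadForm_le hc ha hroot
  have hN₀ : 0 ≤ N := (abs_nonneg _).trans (hN 0).1
  have hroots : ∀ k, ζ (k + 2) ∈ {x : ℝ | ∃ u v w : ℤ, u ≠ 0 ∧ |u| ≤ 3 * N ∧ |v| ≤ 3 * N ∧
      |w| ≤ 3 * N ∧ (u : ℝ) * x ^ 2 + v * x + w = 0} := fun k => by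
    refine ⟨F (p (k + 1)) (q (k + 1)),
      F (p (k + 1) + p k) (q (k + 1) + q k) - F (p (k + 1)) (q (k + 1)) - F (p k) (q k),
      F (p k) (q k), quadForm_ne_zero ha hd₂ hroot ?_, ?_, ?_, ?_, ?_⟩
    · exact (zero_lt_one.trans_le (hc.one_le_q (h.one_le_aCF ha) (k + 1))).ne'
    · linarith [(hN (k + 1)).1]
    · linarith [abs_sub (F (p (k + 1) + p k) (q (k + 1) + q k) - F (p (k + 1)) (q (k + 1)))
        (F (p k) (q k)), abs_sub (F (p (k + 1) + p k) (q (k + 1) + q k)) (F (p (k + 1)) (q (k + 1))),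
        hN k, hN (k + 1)]
    · linarith [(hN k).1]
    · push_cast [hF]
      exact quadForm_add_mul_add_eq_zero hroot (h.mul_q_add hc ha k)
  obtain ⟨i, j, hij, heq⟩ :=
    (finite_setOf_quadratic_root (3 * N)).exists_lt_map_eq_of_forall_mem hroots
  exact ⟨i + 2, j + 2, by omega, heq⟩

end IsCompleteQuotients

theorem periodic_iff_quadratic_general (a : ℝ) (ha : Irrational a)
    (aCF : ℕ → ℤ) (ζ : ℕ → ℝ)
    (hζ0 : ζ 0 = a)
    (hfloor : ∀ k, aCF k = ⌊ζ k⌋)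
    (hζ : ∀ k, ζ k = (aCF k : ℝ) + 1 / ζ (k + 1))
    (p q : ℕ → ℤ)
    (hq0 : q 0 = 1) (hq1 : q 1 = aCF 1)
    (hqrec : ∀ k, q (k + 2) = aCF (k + 2) * q (k + 1) + q k)
    (hp0 : p 0 = aCF 0) (hp1 : p 1 = aCF 1 * aCF 0 + 1)
    (hprec : ∀ k, p (k + 2) = aCF (k + 2) * p (k + 1) + p k) :
    (∃ ξ ν : ℕ, 0 < ν ∧ ∀ k, ξ < k → aCF (k + ν) = aCF k) ↔
      ∃ c₂ c₁ c₀ : ℚ, c₂ ≠ 0 ∧ (c₂ : ℝ) * a ^ 2 + (c₁ : ℝ) * a + (c₀ : ℝ) = 0 := by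
  have h : IsCompleteQuotients a aCF ζ := ⟨hζ0, hfloor, hζ⟩
  have hc : IsConvergents aCF p q := ⟨hq0, hq1, hqrec, hp0, hp1, hprec⟩
  rw [h.eventually_periodic_iff ha]
  constructor
  · rintro ⟨i, j, hij, heq⟩
    exact h.exists_rat_quadratic_of_eq hc ha hij (h.add_eq_of_eq heq 2)
  · rintro ⟨c₂, c₁, c₀, hc₂, hroot⟩
    obtain ⟨d₂, d₁, d₀, hd₂, hroot⟩ := exists_int_quadratic_of_rat hc₂ hroot
    exact h.exists_lt_eq_of_quadratic hc ha hd₂ hroot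

theorem periodic_iff_quadratic (a : ℝ) (ha : Irrational a)
    (aCF : ℕ → ℤ) (ζ : ℕ → ℝ)
    (hζ0 : ζ 0 = a)
    (hfloor : ∀ k, aCF k = ⌊ζ k⌋)
    (hζ : ∀ k, ζ k = (aCF k : ℝ) + 1 / ζ (k + 1))
    (p q : ℕ → ℤ)
    (hq0 : q 0 = 1) (hq1 : q 1 = aCF 1)
    (hqrec : ∀ k, q (k + 2) = aCF (k + 2) * q (k + 1) + q k)
    (hp0 : p 0 = aCF 0) (hp1 : p 1 = aCF 1 * aCF 0 + 1)
    (hprec : ∀ k, p (k + 2) = aCF (k + 2) * p (k + 1) + p k)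
    (β : ℕ → ℝ)
    (hβ : ∀ k, β k = (q k : ℝ) * a - (p k : ℝ)) :
    (∃ ξ ν : ℕ, 0 < ν ∧ ∀ k, ξ < k → aCF (k + ν) = aCF k) ↔
      ∃ c₂ c₁ c₀ : ℚ, c₂ ≠ 0 ∧ (c₂ : ℝ) * a ^ 2 + (c₁ : ℝ) * a + (c₀ : ℝ) = 0 :=
  periodic_iff_quadratic_general a ha aCF ζ hζ0 hfloor hζ p q hq0 hq1 hqrec hp0 hp1 hprec
end

section
/- For the golden ratio φ and any n ∈ ℕ with Zeckendorf (Ostrowski) representation Σ_k b_{k+1}q_k (q_k Fibonacci numbers), define L(n) := Σ_{k≥1} b_{k+2}q_k (the digit shift). Then n = L(n)·φ − f(L(n)·φ) + b_2, where f(mφ) denotes the unique representative of mφ modulo ℤ in [1−φ, 2−φ). -/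
set_option maxHeartbeats 1600000 in
theorem golden_T1 (φ : ℝ) (hφ : φ = (1 + Real.sqrt 5) / 2)
    (q : ℕ → ℕ) (hq0 : q 0 = 1) (hq1 : q 1 = 1)
    (hqrec : ∀ k, q (k + 2) = q (k + 1) + q k)
    (β : ℕ → ℝ) (hβ : ∀ k, β k = (q k : ℝ) * φ - (q (k + 1) : ℝ)) (n : ℕ)
    (b : ℕ → ℕ)
    (hbfin : {k | b k ≠ 0}.Finite)
    (hb1 : b 1 = 0)
    (hble : ∀ k, b k ≤ 1)
    (hbcons : ∀ k, b k = 1 → b (k + 1) = 0)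
    (hnrep : n = ∑ᶠ k : ℕ, b (k + 1) * q k)
    (L : ℕ) (hL : (L : ℝ) = ∑ᶠ k : ℕ, (b (k + 3) : ℝ) * (q (k + 1) : ℝ)) :
    ∀ m : ℕ, (L : ℝ) * φ - (m : ℝ) ∈ Set.Ico (1 - φ) (2 - φ) →
      (n : ℝ) = (L : ℝ) * φ - ((L : ℝ) * φ - (m : ℝ)) + (b 2 : ℝ) := by
  intro m hm
  have h5 : Real.sqrt 5 ^ 2 = 5 := Real.sq_sqrt (by norm_num)
  have hs0 : (0:ℝ) ≤ Real.sqrt 5 := Real.sqrt_nonneg 5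
  have hφ2 : φ ^ 2 = φ + 1 := by rw [hφ]; nlinarith
  have hφ1 : 1 < φ := by rw [hφ]; nlinarith
  have hφlt : φ < 2 := by rw [hφ]; nlinarith
  obtain ⟨c, hcdef⟩ : ∃ c : ℝ, c = φ - 1 := ⟨_, rfl⟩
  have hc0 : 0 < c := by rw [hcdef]; linarith
  have hclt : c < 1 := by rw [hcdef]; linarith
  have hc1 : c ^ 2 = 1 - c := by rw [hcdef]; nlinarith
  have hstep : ∀ k : ℕ, c ^ (k + 2) = c ^ k - c ^ (k + 1) := by
    intro k; rw [pow_add, hc1, pow_succ]; ring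
  -- beta formula
  have hbeta : ∀ k : ℕ, β k = (-1 : ℝ) ^ k * c ^ (k + 1) ∧
      β (k + 1) = (-1 : ℝ) ^ (k + 1) * c ^ (k + 2) := by
    intro k
    induction k with
    | zero =>
      constructor
      · rw [hβ 0, hq0, hq1, hcdef]; push_cast; ring
      · have hq2 : q 2 = 2 := by rw [show (2:ℕ) = 0 + 2 from rfl, hqrec 0, hq1, hq0]
        rw [hβ 1, hq1, hq2]; push_cast
        nlinarith [hc1]
    | succ k ih =>
      refine ⟨ih.2, ?_⟩
      have hrec : β (k + 2) = β (k + 1) + β k := by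
        have a1 : q (k + 2) = q (k + 1) + q k := hqrec k
        have a2 : q (k + 3) = q (k + 2) + q (k + 1) := hqrec (k + 1)
        rw [hβ (k+2), hβ (k+1), hβ k, show k + 2 + 1 = k + 3 from rfl, a2, a1]
        push_cast; ring
      rw [hrec, ih.1, ih.2]
      linear_combination (-(-1:ℝ)^k * c^(k+1)) * hc1
  -- bounds on partial sums of digit * beta
  have key : ∀ N : ℕ,
      (Even N → -c + c ^ (N+1) ≤ (∑ j ∈ Finset.range N, (b (j+3) : ℝ) * β (j+1)) ∧
        (∑ j ∈ Finset.range N, (b (j+3) : ℝ) * β (j+1)) ≤ c^2 - c^(N+2)) ∧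
      (¬ Even N → -c + c ^ (N+2) ≤ (∑ j ∈ Finset.range N, (b (j+3) : ℝ) * β (j+1)) ∧
        (∑ j ∈ Finset.range N, (b (j+3) : ℝ) * β (j+1)) ≤ c^2 - c^(N+1)) := by
    intro N
    induction N with
    | zero =>
      refine ⟨fun _ => ⟨?_, ?_⟩, fun h => absurd Even.zero h⟩
      · rw [Finset.range_zero, Finset.sum_empty, pow_one]; linarith
      · rw [Finset.range_zero, Finset.sum_empty]
        simp only [zero_add]; linarith
    | succ N ih =>
      have hsum : (∑ j ∈ Finset.range (N+1), (b (j+3) : ℝ) * β (j+1))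
          = (∑ j ∈ Finset.range N, (b (j+3) : ℝ) * β (j+1)) + (b (N+3) : ℝ) * β (N+1) :=
        Finset.sum_range_succ _ _
      have hβN : β (N+1) = (-1:ℝ)^(N+1) * c^(N+2) := (hbeta N).2
      have hd0 : (0:ℝ) ≤ (b (N+3) : ℝ) := by positivity
      have hd1 : (b (N+3) : ℝ) ≤ 1 := by exact_mod_cast hble (N+3)
      have hcp1 : (0:ℝ) < c ^ (N+1) := pow_pos hc0 _
      have hcp2 : (0:ℝ) < c ^ (N+2) := pow_pos hc0 _
      have hcp3 : (0:ℝ) < c ^ (N+3) := pow_pos hc0 _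
      have hs1 : c ^ (N+3) = c ^ (N+1) - c ^ (N+2) := hstep (N+1)
      rcases Nat.even_or_odd N with he | ho
      · -- N even, N+1 odd
        obtain ⟨l, u⟩ := ih.1 he
        have hpow : ((-1:ℝ))^(N+1) = -1 := by rw [pow_succ, he.neg_one_pow]; ring
        have hβval : β (N+1) = -c^(N+2) := by rw [hβN, hpow]; ring
        have hb2 : (b (N+3) : ℝ) * c^(N+2) ≤ c^(N+2) :=
          mul_le_of_le_one_left hcp2.le hd1
        have tlo : -c^(N+2) ≤ (b (N+3) : ℝ) * β (N+1) := by
          rw [hβval]; nlinarith [mul_nonneg hd0 hcp2.le]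
        have thi : (b (N+3) : ℝ) * β (N+1) ≤ 0 := by
          rw [hβval]; nlinarith [mul_nonneg hd0 hcp2.le]
        have hne : ¬ Even (N+1) := by simpa [Nat.even_add_one] using he
        refine ⟨fun h => absurd h hne, fun _ => ?_⟩
        rw [hsum]
        constructor
        · have : N + 1 + 2 = N + 3 := rfl
          rw [this]; linarith
        · linarith
      · -- N odd, N+1 even
        obtain ⟨l, u⟩ := ih.2 (Nat.not_even_iff_odd.mpr ho)
        have hpow : ((-1:ℝ))^(N+1) = 1 := by
          rw [pow_succ, ho.neg_one_pow]; ring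
        have hβval : β (N+1) = c^(N+2) := by rw [hβN, hpow]; ring
        have tlo : (0:ℝ) ≤ (b (N+3) : ℝ) * β (N+1) := by
          rw [hβval]; exact mul_nonneg hd0 hcp2.le
        have thi : (b (N+3) : ℝ) * β (N+1) ≤ c^(N+2) := by
          rw [hβval]; exact mul_le_of_le_one_left hcp2.le hd1
        have hev : Even (N+1) := Nat.even_add_one.mpr (Nat.not_even_iff_odd.mpr ho)
        refine ⟨fun _ => ?_, fun h => absurd hev h⟩
        rw [hsum]
        constructor
        · linarith
        · have : N + 1 + 2 = N + 3 := rfl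
          rw [this]; linarith
  -- choose a bound M on the support
  obtain ⟨B, hB⟩ := hbfin.bddAbove
  obtain ⟨M, hMdef⟩ : ∃ M : ℕ, M = B + 1 := ⟨_, rfl⟩
  have hb0 : ∀ k, M ≤ k → b k = 0 := by
    intro k hk
    by_contra h
    have : k ≤ B := hB h
    omega
  -- express n as a finite sum
  have hnsum : (n : ℝ) = ∑ k ∈ Finset.range (M+2), (b (k+1) : ℝ) * (q k : ℝ) := by
    have h1 : (∑ᶠ k : ℕ, b (k + 1) * q k) = ∑ k ∈ Finset.range (M+2), b (k+1) * q k := by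
      apply finsum_eq_finset_sum_of_support_subset
      intro k hk
      simp only [Function.mem_support] at hk
      simp only [Finset.coe_range, Set.mem_Iio]
      by_contra hc
      push_neg at hc
      have : b (k+1) = 0 := hb0 _ (by omega)
      simp [this] at hk
    rw [hnrep, h1]
    push_cast
    ring
  have hLsum : (L : ℝ) = ∑ k ∈ Finset.range M, (b (k+3) : ℝ) * (q (k+1) : ℝ) := by
    rw [hL]
    apply finsum_eq_finset_sum_of_support_subset
    intro k hk
    simp only [Function.mem_support] at hk
    simp only [Finset.coe_range, Set.mem_Iio]
    by_contra hc
    push_neg at hc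
    have : b (k+3) = 0 := hb0 _ (by omega)
    simp [this] at hk
  -- expand n sum
  have hnsum2 : (n : ℝ) = (b 2 : ℝ) + ∑ j ∈ Finset.range M, (b (j+3) : ℝ) * (q (j+2) : ℝ) := by
    rw [hnsum, Finset.sum_range_succ' _ (M+1), Finset.sum_range_succ' _ M]
    simp only [hb1, hq0, hq1, Nat.cast_zero, Nat.cast_one, zero_mul, mul_one, add_zero, zero_add]
    exact add_comm _ _
  -- the key identity
  have hid : (L : ℝ) * φ - ((n : ℝ) - (b 2 : ℝ))
      = ∑ j ∈ Finset.range M, (b (j+3) : ℝ) * β (j+1) := by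
    have h1 : ∑ j ∈ Finset.range M, (b (j+3) : ℝ) * β (j+1)
        = (∑ j ∈ Finset.range M, (b (j+3) : ℝ) * (q (j+1) : ℝ)) * φ
          - ∑ j ∈ Finset.range M, (b (j+3) : ℝ) * (q (j+2) : ℝ) := by
      rw [Finset.sum_mul, ← Finset.sum_sub_distrib]
      refine Finset.sum_congr rfl fun j _ => ?_
      rw [hβ]; ring
    rw [h1, ← hLsum, hnsum2]
    ring
  -- strict bounds
  have hSlo : 1 - φ < (L : ℝ) * φ - ((n : ℝ) - (b 2 : ℝ)) := by
    rw [hid]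
    have hcpM : (0:ℝ) < c ^ (M+1) := pow_pos hc0 _
    have hcpM2 : (0:ℝ) < c ^ (M+2) := pow_pos hc0 _
    rcases Nat.even_or_odd M with he | ho
    · have := ((key M).1 he).1
      linarith
    · have := ((key M).2 (Nat.not_even_iff_odd.mpr ho)).1
      linarith
  have hShi : (L : ℝ) * φ - ((n : ℝ) - (b 2 : ℝ)) < 2 - φ := by
    rw [hid]
    have hcpM : (0:ℝ) < c ^ (M+1) := pow_pos hc0 _
    have hcpM2 : (0:ℝ) < c ^ (M+2) := pow_pos hc0 _
    have hcsq : c ^ 2 = 1 - c := hc1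
    rcases Nat.even_or_odd M with he | ho
    · have := ((key M).1 he).2
      linarith
    · have := ((key M).2 (Nat.not_even_iff_odd.mpr ho)).2
      linarith
  -- integer argument
  obtain ⟨hm1, hm2⟩ := hm
  have hz1 : (-1:ℝ) < ((n:ℤ) - (b 2 : ℤ) - (m:ℤ) : ℤ) := by push_cast; linarith
  have hz2 : (((n:ℤ) - (b 2 : ℤ) - (m:ℤ) : ℤ) : ℝ) < 1 := by push_cast; linarith
  have hz : ((n:ℤ) - (b 2 : ℤ) - (m:ℤ) : ℤ) = 0 := by
    have h1 : (-1:ℤ) < (n:ℤ) - (b 2 : ℤ) - (m:ℤ) := by exact_mod_cast hz1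
    have h2 : (n:ℤ) - (b 2 : ℤ) - (m:ℤ) < 1 := by exact_mod_cast hz2
    omega
  have : (n:ℝ) - (b 2 : ℝ) - (m:ℝ) = 0 := by exact_mod_cast hz
  linarith
end

section
/- For the golden ratio φ and n ∈ ℕ with Zeckendorf representation Σ_k b_{k+1}q_k, one has φ·f(nφ) = −f(L(nφ)) − b_2(φ−1), where L(nφ) := (Σ_{k≥1} b_{k+2}q_k)·φ is the shifted element and f maps ℕφ to the representative modulo ℤ in [1−φ, 2−φ). Equivalently, φ·Σ_k b_{k+1}β_k = −Σ_{k>0} b_{k+1}β_{k-1} + b_2·φ·β_1 with φβ_1 = 1−φ. -/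
open Finset

private lemma golden_aux_low (t : ℝ) (ht2 : t^2 = 1 - t) :
    ∀ m : ℕ, ∑ k ∈ Finset.range (2*m), (if Even k then (0:ℝ) else t^(k+1))
      = t - t^(2*m+1) := by
  intro m
  induction m with
  | zero => simp
  | succ m ih =>
    have h2 : 2 * (m+1) = (2*m) + 1 + 1 := by ring
    rw [h2, Finset.sum_range_succ, Finset.sum_range_succ, ih]
    rw [if_pos (even_two_mul m),
      if_neg (by simp [Nat.even_add_one, even_two_mul m] : ¬ Even (2*m+1))]
    linear_combination (t^(2*m+1)) * ht2

private lemma golden_aux_up (t : ℝ) (ht2 : t^2 = 1 - t) :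
    ∀ m : ℕ, ∑ k ∈ Finset.range (2*m+2), (if Even k ∧ k ≠ 0 then t^(k+1) else (0:ℝ))
      = t^2 - t^(2*m+2) := by
  intro m
  induction m with
  | zero =>
    rw [Finset.sum_range_succ, Finset.sum_range_succ, Finset.sum_range_zero]
    norm_num
  | succ m ih =>
    have h2 : 2 * (m+1) + 2 = (2*m+2) + 1 + 1 := by ring
    rw [h2, Finset.sum_range_succ, Finset.sum_range_succ, ih]
    rw [if_pos ⟨by simp [Nat.even_add, even_two_mul m], by omega⟩,
      if_neg (by simp [Nat.even_add_one, Nat.even_add, even_two_mul m])]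
    linear_combination (t^(2*m+2)) * ht2

private lemma golden_aux_mem (t : ℝ) (ht0 : 0 < t) (ht2 : t^2 = 1 - t)
    (c : ℕ → ℕ) (hc1 : c 1 = 0) (hcle : ∀ k, c k ≤ 1) (M : ℕ) :
    ∑ k ∈ Finset.range M, (c (k+1) : ℝ) * ((-1)^k * t^(k+1)) ∈ Set.Ico (-t) (t^2) := by
  set S := ∑ k ∈ Finset.range M, (c (k+1) : ℝ) * ((-1)^k * t^(k+1)) with hS
  have hup1 : S ≤ ∑ k ∈ Finset.range M, (if Even k ∧ k ≠ 0 then t^(k+1) else (0:ℝ)) := by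
    apply Finset.sum_le_sum
    intro k _
    rcases Nat.even_or_odd k with he | ho
    · by_cases hk0 : k = 0
      · subst hk0; simp [hc1]
      · rw [if_pos ⟨he, hk0⟩, he.neg_one_pow, one_mul]
        have h1 : (c (k+1) : ℝ) ≤ 1 := by exact_mod_cast hcle (k+1)
        nlinarith [pow_pos ht0 (k+1)]
    · rw [if_neg (by simp [Nat.not_even_iff_odd.mpr ho])]
      rw [ho.neg_one_pow]
      have : (0:ℝ) ≤ (c (k+1) : ℝ) := by positivity
      nlinarith [pow_pos ht0 (k+1)]
  have hup2 : ∑ k ∈ Finset.range M, (if Even k ∧ k ≠ 0 then t^(k+1) else (0:ℝ))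
      ≤ ∑ k ∈ Finset.range (2*M+2), (if Even k ∧ k ≠ 0 then t^(k+1) else (0:ℝ)) := by
    apply Finset.sum_le_sum_of_subset_of_nonneg (Finset.range_subset_range.mpr (by omega))
    intro i _ _
    split
    · positivity
    · exact le_rfl
  have hlow1 : ∑ k ∈ Finset.range M, (-(if Even k then (0:ℝ) else t^(k+1))) ≤ S := by
    apply Finset.sum_le_sum
    intro k _
    rcases Nat.even_or_odd k with he | ho
    · rw [if_pos he, he.neg_one_pow, one_mul, neg_zero]
      positivity
    · rw [if_neg (by simp [Nat.not_even_iff_odd.mpr ho]), ho.neg_one_pow]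
      have h1 : (c (k+1) : ℝ) ≤ 1 := by exact_mod_cast hcle (k+1)
      have : (0:ℝ) ≤ (c (k+1) : ℝ) := by positivity
      nlinarith [pow_pos ht0 (k+1)]
  have hlow2 : ∑ k ∈ Finset.range M, (if Even k then (0:ℝ) else t^(k+1))
      ≤ ∑ k ∈ Finset.range (2*M), (if Even k then (0:ℝ) else t^(k+1)) := by
    apply Finset.sum_le_sum_of_subset_of_nonneg (Finset.range_subset_range.mpr (by omega))
    intro i _ _
    split
    · exact le_rfl
    · positivity
  rw [Finset.sum_neg_distrib] at hlow1
  rw [golden_aux_up t ht2 M] at hup2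
  rw [golden_aux_low t ht2 M] at hlow2
  constructor
  · have hp : (0:ℝ) < t^(2*M+1) := pow_pos ht0 _
    linarith
  · have hp : (0:ℝ) < t^(2*M+2) := pow_pos ht0 _
    linarith

theorem golden_T2 (φ : ℝ) (hφ : φ = (1 + Real.sqrt 5) / 2)
    (q : ℕ → ℕ) (hq0 : q 0 = 1) (hq1 : q 1 = 1)
    (hqrec : ∀ k, q (k + 2) = q (k + 1) + q k)
    (β : ℕ → ℝ) (hβ : ∀ k, β k = (q k : ℝ) * φ - (q (k + 1) : ℝ)) (n : ℕ)
    (b : ℕ → ℕ)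
    (hbfin : {k | b k ≠ 0}.Finite)
    (hb1 : b 1 = 0)
    (hble : ∀ k, b k ≤ 1)
    (hbcons : ∀ k, b k = 1 → b (k + 1) = 0)
    (hnrep : n = ∑ᶠ k : ℕ, b (k + 1) * q k)
    (L : ℕ) (hL : (L : ℝ) = ∑ᶠ k : ℕ, (b (k + 3) : ℝ) * (q (k + 1) : ℝ)) :
    ∀ mn mL : ℕ,
      (n : ℝ) * φ - (mn : ℝ) ∈ Set.Ico (1 - φ) (2 - φ) →
      (L : ℝ) * φ - (mL : ℝ) ∈ Set.Ico (1 - φ) (2 - φ) →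
      φ * ((n : ℝ) * φ - (mn : ℝ)) =
        -((L : ℝ) * φ - (mL : ℝ)) - (b 2 : ℝ) * (φ - 1) := by
  intro mn mL hmn hmL
  have h5 : Real.sqrt 5 ^ 2 = 5 := Real.sq_sqrt (by norm_num)
  have hs5 : 1 ≤ Real.sqrt 5 := by nlinarith [Real.sqrt_nonneg 5]
  have hφ2 : φ ^ 2 = φ + 1 := by rw [hφ]; nlinarith [h5]
  have hφgt : 1 < φ := by rw [hφ]; nlinarith
  have hφlt : φ < 2 := by nlinarith
  set t : ℝ := φ - 1 with ht
  have ht0 : 0 < t := by rw [ht]; linarith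
  have ht2 : t^2 = 1 - t := by rw [ht]; linear_combination hφ2
  -- β in terms of t
  have hβrec : ∀ k, β (k+2) = β (k+1) + β k := by
    intro k
    have hc1 : (q (k+2):ℝ) = (q (k+1):ℝ) + (q k:ℝ) := by exact_mod_cast hqrec k
    have hc2 : (q (k+2+1):ℝ) = (q (k+1+1):ℝ) + (q (k+1):ℝ) := by
      rw [show k+2+1 = k+1+2 from rfl]
      exact_mod_cast hqrec (k+1)
    rw [hβ (k+2), hβ (k+1), hβ k]
    linear_combination φ * hc1 - hc2
  have hβt : ∀ k, β k = (-1)^k * t^(k+1) := by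
    have key : ∀ k, β k = (-1)^k * t^(k+1) ∧ β (k+1) = (-1)^(k+1) * t^(k+1+1) := by
      intro k
      induction k with
      | zero =>
        constructor
        · rw [hβ 0, hq0, hq1, ht]; push_cast; ring
        · rw [hβ 1, hq1, hqrec 0, hq0, hq1, ht]; push_cast; linear_combination hφ2
      | succ m ih =>
        refine ⟨ih.2, ?_⟩
        rw [hβrec m, ih.1, ih.2]
        linear_combination ((-1)^(m+1) * t^(m+1)) * ht2
    exact fun k => (key k).1
  -- support bound
  obtain ⟨N, hN⟩ := hbfin.bddAbove
  have hb0 : ∀ k, N < k → b k = 0 := by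
    intro k hk
    by_contra h
    exact absurd (hN h) (by omega)
  -- finsum to finset sums
  have hnR : (n:ℝ) = ∑ k ∈ Finset.range (N+3), (b (k+1):ℝ) * (q k:ℝ) := by
    have hsup : (Function.support fun k => b (k+1) * q k) ⊆ ↑(Finset.range (N+3)) := by
      intro k hk
      simp only [Function.mem_support] at hk
      have hb : b (k+1) ≠ 0 := fun h => hk (by simp [h])
      have : k + 1 ≤ N := by by_contra h; exact hb (hb0 _ (by omega))
      simp only [Finset.coe_range, Set.mem_Iio]; omega
    have := finsum_eq_finset_sum_of_support_subset _ hsup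
    rw [this] at hnrep
    rw [hnrep]
    push_cast
    rfl
  have hLR : (L:ℝ) = ∑ k ∈ Finset.range (N+3), (b (k+3):ℝ) * (q (k+1):ℝ) := by
    have hsup : (Function.support fun k => (b (k+3):ℝ) * (q (k+1):ℝ)) ⊆ ↑(Finset.range (N+3)) := by
      intro k hk
      simp only [Function.mem_support] at hk
      have hb : b (k+3) ≠ 0 := by
        intro h; exact hk (by simp [h])
      have : k + 3 ≤ N := by by_contra h; exact hb (hb0 _ (by omega))
      simp only [Finset.coe_range, Set.mem_Iio]; omega
    rw [hL, finsum_eq_finset_sum_of_support_subset _ hsup]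
  -- T = n + L + b 2
  have hT : ∑ k ∈ Finset.range (N+3), (b (k+1):ℝ) * (q (k+1):ℝ)
      = (n:ℝ) + (L:ℝ) + (b 2:ℝ) := by
    have e1 := Finset.sum_range_succ' (fun k => (b (k+1):ℝ) * (q (k+1):ℝ)) (N+2)
    have e3 : ∑ k ∈ Finset.range (N+2), (b (k+2):ℝ) * (q (k+2):ℝ)
        = ∑ k ∈ Finset.range (N+2), ((b (k+2):ℝ) * (q (k+1):ℝ) + (b (k+2):ℝ) * (q k:ℝ)) := by
      refine Finset.sum_congr rfl fun k _ => ?_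
      rw [hqrec k]; push_cast; ring
    rw [Finset.sum_add_distrib] at e3
    have e4 : ∑ k ∈ Finset.range (N+2), (b (k+2):ℝ) * (q (k+1):ℝ) = (n:ℝ) := by
      have := Finset.sum_range_succ' (fun k => (b (k+1):ℝ) * (q k:ℝ)) (N+2)
      rw [← hnR] at this
      simp only [hb1] at this
      push_cast at this
      linarith [this]
    have e5 : ∑ k ∈ Finset.range (N+2), (b (k+2):ℝ) * (q k:ℝ) = (L:ℝ) + (b 2:ℝ) := by
      have e6 := Finset.sum_range_succ' (fun k => (b (k+2):ℝ) * (q k:ℝ)) (N+1)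
      have e7 : ∑ k ∈ Finset.range (N+1), (b (k+3):ℝ) * (q (k+1):ℝ)
          = ∑ k ∈ Finset.range (N+3), (b (k+3):ℝ) * (q (k+1):ℝ) := by
        refine Finset.sum_subset (Finset.range_subset_range.mpr (by omega)) ?_
        intro x hx hnx
        simp only [Finset.mem_range] at hx hnx
        rw [hb0 (x+3) (by omega)]
        simp
      rw [e6, e7, ← hLR, hq0]
      push_cast
      ring
    rw [e1, e3, e4, e5]
    simp only [show (0:ℕ)+1 = 1 from rfl, hb1]
    push_cast
    ring
  -- U = n - b 2
  have hU : ∑ k ∈ Finset.range (N+3), (b (k+3):ℝ) * (q (k+2):ℝ) = (n:ℝ) - (b 2:ℝ) := by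
    have a0 : ∑ k ∈ Finset.range (N+5), (b (k+1):ℝ) * (q k:ℝ) = (n:ℝ) := by
      rw [hnR]
      refine (Finset.sum_subset (Finset.range_subset_range.mpr (by omega)) ?_).symm
      intro x hx hnx
      simp only [Finset.mem_range] at hx hnx
      rw [hb0 (x+1) (by omega)]
      simp
    have a1 := Finset.sum_range_succ' (fun k => (b (k+1):ℝ) * (q k:ℝ)) (N+4)
    have a2 := Finset.sum_range_succ' (fun k => (b (k+2):ℝ) * (q (k+1):ℝ)) (N+3)
    rw [a0] at a1
    simp only [hb1] at a1
    push_cast at a1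
    rw [hq1] at a2
    push_cast at a2
    -- a1 : n = ∑_{k<N+4} b(k+2) q(k+1) + 0
    -- a2 : ∑_{k<N+4} b(k+2) q(k+1) = ∑_{k<N+3} b(k+3) q(k+2) + b 2
    linarith [a1, a2]
  -- S_n and S_L
  have hSn : ∑ k ∈ Finset.range (N+3), (b (k+1):ℝ) * β k
      = (n:ℝ) * φ - ((n:ℝ) + (L:ℝ) + (b 2:ℝ)) := by
    have e : ∀ k ∈ Finset.range (N+3), (b (k+1):ℝ) * β k
        = (b (k+1):ℝ) * (q k:ℝ) * φ - (b (k+1):ℝ) * (q (k+1):ℝ) := by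
      intro k _; rw [hβ k]; ring
    rw [Finset.sum_congr rfl e, Finset.sum_sub_distrib, ← Finset.sum_mul, ← hnR, hT]
  have hSL : ∑ k ∈ Finset.range (N+3), (b (k+3):ℝ) * β (k+1)
      = (L:ℝ) * φ - ((n:ℝ) - (b 2:ℝ)) := by
    have e : ∀ k ∈ Finset.range (N+3), (b (k+3):ℝ) * β (k+1)
        = (b (k+3):ℝ) * (q (k+1):ℝ) * φ - (b (k+3):ℝ) * (q (k+2):ℝ) := by
      intro k _; rw [hβ (k+1)]; ring
    rw [Finset.sum_congr rfl e, Finset.sum_sub_distrib, ← Finset.sum_mul, ← hLR, hU]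
  -- interval memberships
  have hIl : -t = 1 - φ := by rw [ht]; ring
  have hIr : t^2 = 2 - φ := by rw [ht]; linear_combination hφ2
  have hmem1 : (n:ℝ) * φ - ((n:ℝ) + (L:ℝ) + (b 2:ℝ)) ∈ Set.Ico (1 - φ) (2 - φ) := by
    rw [← hSn, ← hIl, ← hIr]
    have := golden_aux_mem t ht0 ht2 b hb1 hble (N+3)
    have e : ∑ k ∈ Finset.range (N+3), (b (k+1):ℝ) * ((-1)^k * t^(k+1))
        = ∑ k ∈ Finset.range (N+3), (b (k+1):ℝ) * β k := by
      refine Finset.sum_congr rfl fun k _ => ?_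
      rw [hβt k]
    rwa [e] at this
  have hmem2 : (L:ℝ) * φ - ((n:ℝ) - (b 2:ℝ)) ∈ Set.Ico (1 - φ) (2 - φ) := by
    rw [← hSL, ← hIl, ← hIr]
    set c : ℕ → ℕ := fun j => if j ≤ 1 then 0 else b (j+1) with hc
    have hc1 : c 1 = 0 := by simp [hc]
    have hcle : ∀ k, c k ≤ 1 := by
      intro k; rw [hc]; dsimp; split
      · omega
      · exact hble (k+1)
    have := golden_aux_mem t ht0 ht2 c hc1 hcle (N+4)
    have e := Finset.sum_range_succ' (fun k => (c (k+1):ℝ) * ((-1)^k * t^(k+1))) (N+3)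
    rw [e] at this
    simp only [hc1] at this
    have e2 : ∑ k ∈ Finset.range (N+3), (c (k+1+1):ℝ) * ((-1)^(k+1) * t^(k+1+1))
        = ∑ k ∈ Finset.range (N+3), (b (k+3):ℝ) * β (k+1) := by
      refine Finset.sum_congr rfl fun k _ => ?_
      have : c (k+1+1) = b (k+3) := by rw [hc]; simp
      rw [this, hβt (k+1)]
    rw [e2] at this
    simpa using this
  -- uniqueness of representative
  have huniq : ∀ (x u : ℝ) (m : ℕ) (d : ℤ), (d:ℝ) = (m:ℝ) - u →
      x - u ∈ Set.Ico (1 - φ) (2 - φ) → x - (m:ℝ) ∈ Set.Ico (1 - φ) (2 - φ) →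
      (m:ℝ) = u := by
    intro x u m d hd h1 h2
    simp only [Set.mem_Ico] at h1 h2
    have habs : |(d:ℝ)| < 1 := by
      rw [abs_lt, hd]
      constructor <;> linarith
    have hd0 : d = 0 := by
      have h' : |d| < 1 := by exact_mod_cast habs
      rw [abs_lt] at h'
      omega
    rw [hd0] at hd
    simp at hd
    linarith
  have hmn' : (mn:ℝ) = (n:ℝ) + (L:ℝ) + (b 2:ℝ) := by
    refine huniq ((n:ℝ)*φ) _ mn ((mn:ℤ) - ((n:ℤ) + (L:ℤ) + (b 2:ℤ))) (by push_cast; ring) hmem1 hmn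
  have hmL' : (mL:ℝ) = (n:ℝ) - (b 2:ℝ) := by
    refine huniq ((L:ℝ)*φ) _ mL ((mL:ℤ) - ((n:ℤ) - (b 2:ℤ))) (by push_cast; ring) hmem2 hmL
  rw [hmn', hmL']
  linear_combination (n:ℝ) * hφ2
end
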